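/- arXiv:1811.11614 — 7 statements merged into one kernel-verified Lean document; each statement's English description precedes it below -/
import Mathlib

section
/- Let a < b be real numbers, Δ > 0, and 0 < h ≤ (2/3)(b−a)/Δ. Then for every x ∈ [a,b] and every v ∈ ℝ^{m+1}, (1/h)·∫_a^b (v^T U((u−x)/h))² 1_{|u−x| < Δh} du ≥ min( ∫₀^{Δ/2} (v^T U(u))² du , ∫_{−Δ/2}^0 (v^T U(u))² du ). -/
open MeasureTheory

/-- Let `a < b`, `Δ > 0`, `0 < h ≤ (2/3)(b−a)/Δ`.  Then for every `x ∈ [a,b]` and every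
`v ∈ ℝ^{m+1}`,
`(1/h)·∫_a^b (vᵀU((u−x)/h))² 1_{|u−x|<Δh} du
  ≥ min(∫₀^{Δ/2} (vᵀU(u))² du, ∫_{−Δ/2}^0 (vᵀU(u))² du)`. -/
theorem stmt_3 (m : ℕ)
    (U : ℝ → Fin (m + 1) → ℝ)
    (hU : ∀ z i, U z i = z ^ (i : ℕ) / (Nat.factorial i : ℝ))
    (a b Δ h : ℝ) (hab : a < b) (hΔ : 0 < Δ) (hh : 0 < h)
    (hhle : h ≤ 2 / 3 * ((b - a) / Δ)) :
    ∀ x ∈ Set.Icc a b, ∀ v : Fin (m + 1) → ℝ,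
      min (∫ u in (0 : ℝ)..(Δ / 2), (∑ i, v i * U u i) ^ 2)
          (∫ u in (-(Δ / 2))..(0 : ℝ), (∑ i, v i * U u i) ^ 2) ≤
        1 / h * ∫ u in a..b, (∑ i, v i * U ((u - x) / h) i) ^ 2 *
          Set.indicator {u : ℝ | |u - x| < Δ * h} (fun _ => (1 : ℝ)) u := by
  intro x hx v
  set P : ℝ → ℝ := fun t => (∑ i, v i * U t i) ^ 2 with hP
  have hPc : Continuous P := by
    simp only [hP, hU]
    continuity
  set S : Set ℝ := {u : ℝ | |u - x| < Δ * h} with hS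
  have hSmeas : MeasurableSet S := by
    have : S = Metric.ball x (Δ * h) := by
      ext u; simp [hS, Metric.mem_ball, Real.dist_eq]
    rw [this]; exact measurableSet_ball
  set g : ℝ → ℝ := fun u => P ((u - x) / h) with hg
  have hgc : Continuous g := hPc.comp (by continuity)
  set F : ℝ → ℝ := fun u => P ((u - x) / h) *
      Set.indicator S (fun _ => (1 : ℝ)) u with hF
  have hFeq : F = Set.indicator S g := by
    funext u
    by_cases hu : u ∈ S <;> simp [hF, hg, Set.indicator_apply, hu]
  have hFint : IntervalIntegrable F volume a b := by
    rw [hFeq, intervalIntegrable_iff]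
    exact (intervalIntegrable_iff.mp (hgc.intervalIntegrable a b)).indicator hSmeas
  have hFnn : ∀ u, 0 ≤ F u := fun u =>
    mul_nonneg (sq_nonneg _) (Set.indicator_nonneg (fun _ _ => zero_le_one) u)
  -- the half-window length
  set e : ℝ := h * (Δ / 2) with he
  have hepos : 0 < e := by positivity
  have hesmall : e ≤ (b - a) / 3 := by
    have h1 : h * Δ ≤ 2 / 3 * (b - a) := by
      have := mul_le_mul_of_nonneg_right hhle (le_of_lt hΔ)
      calc h * Δ ≤ 2 / 3 * ((b - a) / Δ) * Δ := this
        _ = 2 / 3 * (b - a) := by field_simp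
    nlinarith
  -- key step: integral over a sub-window inside S
  have key : ∀ c d : ℝ, a ≤ c → c ≤ d → d ≤ b → Set.uIcc c d ⊆ S →
      ∫ u in c..d, g u ≤ ∫ u in a..b, F u := by
    intro c d hac hcd hdb hsub
    have h1 : ∫ u in c..d, g u = ∫ u in c..d, F u := by
      apply intervalIntegral.integral_congr
      intro u hu
      have : u ∈ S := hsub hu
      simp [hF, hg, Set.indicator_apply, this]
    rw [h1]
    exact intervalIntegral.integral_mono_interval hac hcd hdb
      (Filter.Eventually.of_forall fun u => hFnn u) hFint
  have hinv : (0:ℝ) < 1 / h := by positivity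
  rcases le_or_gt x ((a + b) / 2) with hxle | hxgt
  · -- use right window [x, x+e]
    have hsub : Set.uIcc x (x + e) ⊆ S := by
      rw [Set.uIcc_of_le (by linarith)]
      intro u hu
      simp only [Set.mem_Icc] at hu
      have : |u - x| ≤ e := by rw [abs_le]; constructor <;> linarith
      simp only [hS, Set.mem_setOf_eq]
      have : e < Δ * h := by
        rw [he]; nlinarith
      calc |u - x| ≤ e := ‹|u - x| ≤ e›
        _ < Δ * h := this
    have hle : ∫ u in x..(x + e), g u ≤ ∫ u in a..b, F u :=
      key x (x + e) hx.1 (by linarith) (by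
        have h2 : x + e ≤ (a + b) / 2 + (b - a) / 3 := by linarith
        linarith) hsub
    have hchange : ∫ u in x..(x + e), g u = h * ∫ u in (0:ℝ)..(Δ / 2), P u := by
      have h1 : ∫ u in x..(x + e), g u = ∫ s in (0:ℝ)..e, P (s / h) := by
        simp only [hg]
        have := intervalIntegral.integral_comp_sub_right (fun s => P (s / h)) x
          (a := x) (b := x + e)
        simpa using this
      rw [h1, intervalIntegral.integral_comp_div _ (ne_of_gt hh)]
      have : e / h = Δ / 2 := by field_simp [he]; ring
      rw [this, zero_div]
      simp [smul_eq_mul]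
    calc min (∫ u in (0:ℝ)..(Δ / 2), P u) (∫ u in (-(Δ / 2))..(0:ℝ), P u)
        ≤ ∫ u in (0:ℝ)..(Δ / 2), P u := min_le_left _ _
      _ = 1 / h * (h * ∫ u in (0:ℝ)..(Δ / 2), P u) := by field_simp
      _ ≤ 1 / h * ∫ u in a..b, F u := by
          apply mul_le_mul_of_nonneg_left _ (le_of_lt hinv)
          rw [← hchange]; exact hle
  · -- use left window [x-e, x]
    have hsub : Set.uIcc (x - e) x ⊆ S := by
      rw [Set.uIcc_of_le (by linarith)]
      intro u hu
      simp only [Set.mem_Icc] at hu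
      have h1 : |u - x| ≤ e := by rw [abs_le]; constructor <;> linarith
      simp only [hS, Set.mem_setOf_eq]
      have h2 : e < Δ * h := by rw [he]; nlinarith
      linarith
    have hle : ∫ u in (x - e)..x, g u ≤ ∫ u in a..b, F u :=
      key (x - e) x (by
        have h2 : (a + b) / 2 - (b - a) / 3 ≤ x - e + (0:ℝ) := by linarith
        linarith) (by linarith) hx.2 hsub
    have hchange : ∫ u in (x - e)..x, g u = h * ∫ u in (-(Δ / 2))..(0:ℝ), P u := by
      have h1 : ∫ u in (x - e)..x, g u = ∫ s in (-e)..(0:ℝ), P (s / h) := by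
        simp only [hg]
        have := intervalIntegral.integral_comp_sub_right (fun s => P (s / h)) x
          (a := x - e) (b := x)
        simpa using this
      rw [h1, intervalIntegral.integral_comp_div _ (ne_of_gt hh)]
      have h2 : -e / h = -(Δ / 2) := by field_simp [he]; ring
      rw [h2, zero_div]
      simp [smul_eq_mul]
    calc min (∫ u in (0:ℝ)..(Δ / 2), P u) (∫ u in (-(Δ / 2))..(0:ℝ), P u)
        ≤ ∫ u in (-(Δ / 2))..(0:ℝ), P u := min_le_right _ _
      _ = 1 / h * (h * ∫ u in (-(Δ / 2))..(0:ℝ), P u) := by field_simp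
      _ ≤ 1 / h * ∫ u in a..b, F u := by
          apply mul_le_mul_of_nonneg_left _ (le_of_lt hinv)
          rw [← hchange]; exact hle
end

section
/- Assume l is an occupation density for X on [0,T] satisfying inf_{x∈I} l(x) ≥ νT/|I| for some ν ∈ (0,1], and let 0 < h ≤ (2/3)|I|/Δ. Then for every x ∈ I the matrix B(x,h) is positive definite and its smallest eigenvalue satisfies λ_min(B(x,h)) ≥ (νT/|I|)·K_min·min( λ_min(∫₀^{Δ/2} U(u)U(u)^T du), λ_min(∫_{−Δ/2}^0 U(u)U(u)^T du) ) = 2·A_K·νT/|I| > 0. -/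
open MeasureTheory Matrix

lemma ray_lower {n : ℕ} (M : Matrix (Fin (n+1)) (Fin (n+1)) ℝ) (hM : M.IsHermitian)
    (v : Fin (n+1) → ℝ) :
    (⨅ i, hM.eigenvalues i) * (v ⬝ᵥ v) ≤ v ⬝ᵥ (M *ᵥ v) := by
  set α := ⨅ i, hM.eigenvalues i with hα
  have hle : ∀ i, α ≤ hM.eigenvalues i := fun i =>
    ciInf_le (Set.Finite.bddBelow (Set.finite_range _)) i
  set U := (hM.eigenvectorUnitary : Matrix (Fin (n+1)) (Fin (n+1)) ℝ)
  have hUU : U * star U = 1 := (Matrix.mem_unitaryGroup_iff).mp hM.eigenvectorUnitary.2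
  have hco : (RCLike.ofReal ∘ hM.eigenvalues : Fin (n+1) → ℝ) = hM.eigenvalues := by
    funext i; simp
  have hdiag : diagonal (fun i => hM.eigenvalues i - α)
      = diagonal hM.eigenvalues - α • (1 : Matrix (Fin (n+1)) (Fin (n+1)) ℝ) := by
    ext i j
    rcases eq_or_ne i j with rfl | hne
    · simp [Matrix.one_apply]
    · simp [Matrix.diagonal_apply_ne _ hne, Matrix.one_apply_ne hne]
  have key : M - α • 1 = U * diagonal (fun i => hM.eigenvalues i - α) * star U := by
    have hst := hM.spectral_theorem
    rw [hco, Unitary.conjStarAlgAut_apply] at hst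
    rw [hdiag, mul_sub, sub_mul, mul_smul_comm, mul_one, smul_mul_assoc, hUU, ← hst]
  have hpsd : PosSemidef (M - α • 1) := by
    rw [key, Matrix.star_eq_conjTranspose]
    exact (posSemidef_diagonal_iff.mpr (fun i => sub_nonneg.mpr (hle i))).mul_mul_conjTranspose_same U
  have h0 := hpsd.dotProduct_mulVec_nonneg v
  rw [sub_mulVec, dotProduct_sub, Matrix.smul_mulVec, Matrix.one_mulVec,
    dotProduct_smul, star_trivial, smul_eq_mul] at h0
  linarith [h0]

lemma ray_min {n : ℕ} (M : Matrix (Fin (n+1)) (Fin (n+1)) ℝ) (hM : M.IsHermitian)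
    (α : ℝ) (hall : ∀ v : Fin (n+1) → ℝ, α * (v ⬝ᵥ v) ≤ v ⬝ᵥ (M *ᵥ v)) :
    α ≤ ⨅ i, hM.eigenvalues i := by
  apply le_ciInf
  intro i
  set e : Fin (n+1) → ℝ := ⇑(hM.eigenvectorBasis i) with he
  have h1 : e ⬝ᵥ e = 1 := by
    have hn := hM.eigenvectorBasis.orthonormal.1 i
    have h2 : (inner ℝ (hM.eigenvectorBasis i) (hM.eigenvectorBasis i) : ℝ) = 1 := by
      rw [real_inner_self_eq_norm_sq, hn]; norm_num
    rw [EuclideanSpace.inner_eq_star_dotProduct] at h2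
    simpa using h2
  have h2 : hM.eigenvalues i = e ⬝ᵥ (M *ᵥ e) := by
    have h3 := hM.eigenvalues_eq i
    simpa using h3
  calc α = α * (e ⬝ᵥ e) := by rw [h1, mul_one]
    _ ≤ e ⬝ᵥ (M *ᵥ e) := hall e
    _ = hM.eigenvalues i := h2.symm

lemma sq_int_pos {n : ℕ} (v : Fin (n+1) → ℝ) (hv : v ≠ 0) (a b : ℝ) (hab : a < b) :
    0 < ∫ w in a..b, (∑ i, v i * (w ^ (i:ℕ) / (Nat.factorial i : ℝ)))^2 := by
  classical
  set p : Polynomial ℝ :=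
    ∑ i : Fin (n+1), Polynomial.C (v i / (Nat.factorial i : ℝ)) * Polynomial.X ^ (i:ℕ) with hp
  have hev : ∀ w : ℝ, p.eval w = ∑ i, v i * (w ^ (i:ℕ) / (Nat.factorial i : ℝ)) := by
    intro w
    rw [hp, Polynomial.eval_finset_sum]
    refine Finset.sum_congr rfl fun i _ => ?_
    simp [Polynomial.eval_mul, Polynomial.eval_pow]
    ring
  have hpne : p ≠ 0 := by
    obtain ⟨i0, hi0⟩ := Function.ne_iff.mp hv
    intro hzero
    have hc : p.coeff (i0 : ℕ) = v i0 / (Nat.factorial i0 : ℝ) := by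
      rw [hp, Polynomial.finset_sum_coeff]
      rw [Finset.sum_eq_single i0]
      · simp
      · intro j _ hj
        have hne : ((i0:ℕ)) ≠ (j:ℕ) := fun hh => hj (Fin.val_injective hh.symm)
        simp [Polynomial.coeff_C_mul, Polynomial.coeff_X_pow, hne]
      · simp
    rw [hzero, Polynomial.coeff_zero] at hc
    rcases div_eq_zero_iff.mp hc.symm with h1 | h2
    · exact hi0 (by simp [h1])
    · exact Nat.cast_ne_zero.mpr (Nat.factorial_ne_zero (i0:ℕ)) h2
  have hcont : Continuous fun w : ℝ => (p.eval w)^2 := by continuity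
  have hint : IntervalIntegrable (fun w => (p.eval w)^2) volume a b :=
    hcont.intervalIntegrable a b
  have hpos : 0 < ∫ w in a..b, (p.eval w)^2 := by
    rw [intervalIntegral.integral_pos_iff_support_of_nonneg_ae
      (Filter.Eventually.of_forall fun w => sq_nonneg _) hint]
    refine ⟨hab, ?_⟩
    have hroots : {w : ℝ | p.IsRoot w}.Finite := Polynomial.finite_setOf_isRoot hpne
    have hsub : Set.Ioc a b ⊆ (Function.support (fun w => (p.eval w)^2) ∩ Set.Ioc a b)
        ∪ {w : ℝ | p.IsRoot w} := by
      intro w hw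
      by_cases hz : p.eval w = 0
      · exact Or.inr hz
      · exact Or.inl ⟨by simp [Function.mem_support, pow_eq_zero_iff, hz], hw⟩
    by_contra hcon
    push_neg at hcon
    have h0 : volume (Function.support (fun w => (p.eval w)^2) ∩ Set.Ioc a b) = 0 :=
      le_antisymm hcon zero_le
    have hioc : volume (Set.Ioc a b) = 0 := by
      have h1 := (measure_mono (μ := volume) hsub).trans
        (measure_union_le (μ := (volume : Measure ℝ)) _ _)
      rw [h0, Set.Finite.measure_zero hroots (volume : Measure ℝ), add_zero] at h1
      exact le_antisymm h1 zero_le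
    rw [Real.volume_Ioc] at hioc
    simp only [ENNReal.ofReal_eq_zero] at hioc
    linarith
  calc (0:ℝ) < ∫ w in a..b, (p.eval w)^2 := hpos
    _ = _ := by
      apply intervalIntegral.integral_congr
      intro w _
      dsimp only
      rw [hev]

lemma lam_pos {n : ℕ} (M : Matrix (Fin (n+1)) (Fin (n+1)) ℝ) (hM : M.IsHermitian)
    (hq : ∀ v : Fin (n+1) → ℝ, v ≠ 0 → 0 < v ⬝ᵥ (M *ᵥ v)) :
    0 < ⨅ i, hM.eigenvalues i := by
  have hpos : ∀ i, 0 < hM.eigenvalues i := by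
    intro i
    have hne : (⇑(hM.eigenvectorBasis i) : Fin (n+1) → ℝ) ≠ 0 := by
      intro h0
      apply hM.eigenvectorBasis.orthonormal.ne_zero i
      ext j
      exact congrFun h0 j
    have h2 := hM.eigenvalues_eq i
    have h3 : hM.eigenvalues i = (⇑(hM.eigenvectorBasis i) : Fin (n+1) → ℝ) ⬝ᵥ
        (M *ᵥ ⇑(hM.eigenvectorBasis i)) := by simpa using h2
    rw [h3]
    exact hq _ hne
  obtain ⟨i0, hi0⟩ := Finite.exists_min hM.eigenvalues
  exact lt_of_lt_of_le (hpos i0) (le_ciInf hi0)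

lemma gram_herm {n : ℕ} (U : ℝ → Fin (n+1) → ℝ) (a b : ℝ) :
    (Matrix.of fun i j => ∫ u in a..b, U u i * U u j).IsHermitian := by
  ext i j
  simp only [Matrix.conjTranspose_apply, Matrix.of_apply, star_trivial]
  simp_rw [mul_comm]

lemma dot_mulVec_expand {n : ℕ} (M : Matrix (Fin (n+1)) (Fin (n+1)) ℝ) (v : Fin (n+1) → ℝ) :
    v ⬝ᵥ (M *ᵥ v) = ∑ i, ∑ j, v i * (M i j * v j) := by
  simp [dotProduct, Matrix.mulVec, Finset.mul_sum]


lemma sum_swap_int {n : ℕ} (g : Fin (n+1) → Fin (n+1) → ℝ → ℝ) (a b : ℝ)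
    (hint : ∀ i j, IntervalIntegrable (g i j) volume a b) :
    ∑ i, ∑ j, ∫ u in a..b, g i j u = ∫ u in a..b, ∑ i, ∑ j, g i j u := by
  have hsum_int : ∀ i, IntervalIntegrable (fun u => ∑ j, g i j u) volume a b := by
    intro i
    have h1 := IntervalIntegrable.sum (μ := volume) (a := a) (b := b) Finset.univ
      (f := g i) (fun j _ => hint i j)
    have heq : (∑ j, g i j) = fun u => ∑ j, g i j u := by funext u; simp
    rwa [heq] at h1
  refine Eq.trans ?_ (intervalIntegral.integral_finset_sum
    (f := fun i u => ∑ j, g i j u) (fun i _ => hsum_int i)).symm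
  exact Finset.sum_congr rfl fun i _ =>
    (intervalIntegral.integral_finset_sum (f := fun j u => g i j u) fun j _ => hint i j).symm


lemma gram_quad {n : ℕ} (U : ℝ → Fin (n+1) → ℝ)
    (hU : ∀ z i, U z i = z ^ (i:ℕ) / (Nat.factorial i : ℝ)) (a b : ℝ) (v : Fin (n+1) → ℝ) :
    v ⬝ᵥ ((Matrix.of fun i j => ∫ u in a..b, U u i * U u j) *ᵥ v)
      = ∫ u in a..b, (∑ i, v i * U u i)^2 := by
  have hcontU : ∀ i : Fin (n+1), Continuous fun u : ℝ => U u i := by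
    intro i
    have hfe : (fun u : ℝ => U u i) = fun u : ℝ => u ^ (i:ℕ) / ((Nat.factorial i : ℕ) : ℝ) :=
      funext fun u => hU u i
    rw [hfe]
    continuity
  have hint : ∀ i j : Fin (n+1),
      IntervalIntegrable (fun u => (v i * U u i) * (v j * U u j)) volume a b := fun i j =>
    (((continuous_const.mul (hcontU i)).mul (continuous_const.mul (hcontU j)))).intervalIntegrable a b
  rw [dot_mulVec_expand]
  have hij : ∀ i j : Fin (n+1),
      v i * ((Matrix.of fun i j => ∫ u in a..b, U u i * U u j) i j * v j)
        = ∫ u in a..b, (v i * U u i) * (v j * U u j) := by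
    intro i j
    show v i * ((∫ u in a..b, U u i * U u j) * v j) = _
    rw [← intervalIntegral.integral_mul_const, ← intervalIntegral.integral_const_mul]
    congr 1
    funext u
    ring
  calc ∑ i, ∑ j, v i * ((Matrix.of fun i j => ∫ u in a..b, U u i * U u j) i j * v j)
      = ∑ i, ∑ j, ∫ u in a..b, (v i * U u i) * (v j * U u j) :=
        Finset.sum_congr rfl fun i _ => Finset.sum_congr rfl fun j _ => hij i j
    _ = ∫ u in a..b, ∑ i, ∑ j, (v i * U u i) * (v j * U u j) := by
        exact sum_swap_int (fun i j u => (v i * U u i) * (v j * U u j)) a b hint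
    _ = ∫ u in a..b, (∑ i, v i * U u i)^2 := by
        congr 1
        funext u
        rw [pow_two, Finset.sum_mul_sum]

lemma bdd_meas_intInt (g : ℝ → ℝ) (hg : Measurable g) (C : ℝ) (hC : ∀ s, |g s| ≤ C)
    (a b : ℝ) : IntervalIntegrable g volume a b := by
  rw [intervalIntegrable_iff]
  exact Measure.integrableOn_of_bounded (measure_Ioc_lt_top).ne
    hg.aestronglyMeasurable (Filter.Eventually.of_forall fun s => by
      simpa [Real.norm_eq_abs] using hC s)

lemma occ_loc_int (T : ℝ) (hT : 0 < T) (X : ℝ → ℝ) (hX : Measurable X)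
    (l : ℝ → ℝ) (hlmeas : Measurable l) (hlnonneg : ∀ u, 0 ≤ l u)
    (hocc : ∀ f : ℝ → ℝ, Measurable f → (∃ C, ∀ u, |f u| ≤ C) →
      (∫ s in (0 : ℝ)..T, f (X s)) = ∫ u, f u * l u)
    (a b : ℝ) : IntegrableOn l (Set.Icc a b) volume := by
  classical
  set S : ℕ → Set ℝ := fun k => Set.Icc a b ∩ {w | l w ≤ (k : ℝ)} with hS
  have hSmeas : ∀ k, MeasurableSet (S k) := fun k =>
    measurableSet_Icc.inter (hlmeas measurableSet_Iic)
  -- each truncated integral is ≤ T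
  have hkey : ∀ k : ℕ, (∫ u, Set.indicator (S k) l u) ≤ T := by
    intro k
    set f : ℝ → ℝ := Set.indicator (S k) (fun _ => (1 : ℝ)) with hf
    have hfmeas : Measurable f := measurable_const.indicator (hSmeas k)
    have hfbd : ∀ u, |f u| ≤ 1 := by
      intro u
      by_cases hu : u ∈ S k <;> simp [hf, Set.indicator_apply, hu]
    have heq := hocc f hfmeas ⟨1, hfbd⟩
    have hfl : ∀ u, f u * l u = Set.indicator (S k) l u := by
      intro u
      by_cases hu : u ∈ S k <;> simp [hf, Set.indicator_apply, hu]
    have hlhs : (∫ s in (0:ℝ)..T, f (X s)) ≤ T := by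
      have h1 : IntervalIntegrable (fun s => f (X s)) volume 0 T :=
        bdd_meas_intInt _ (hfmeas.comp hX) 1 (fun s => hfbd (X s)) 0 T
      have h2 : IntervalIntegrable (fun _ : ℝ => (1:ℝ)) volume 0 T :=
        intervalIntegrable_const
      have h3 := intervalIntegral.integral_mono_on hT.le h1 h2
        (fun s _ => by
          have := hfbd (X s); exact (abs_le.mp this).2)
      simpa using h3
    calc (∫ u, Set.indicator (S k) l u) = ∫ u, f u * l u := by
          congr 1; funext u; exact (hfl u).symm
      _ = ∫ s in (0:ℝ)..T, f (X s) := heq.symm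
      _ ≤ T := hlhs
  -- truncated indicators are integrable
  have hSint : ∀ k : ℕ, Integrable (Set.indicator (S k) l) volume := by
    intro k
    have hgmeas : Measurable (Set.indicator (S k) l) := hlmeas.indicator (hSmeas k)
    have hgbig : Integrable (Set.indicator (Set.Icc a b) (fun _ => (k:ℝ))) volume := by
      rw [integrable_indicator_iff measurableSet_Icc]
      exact integrableOn_const measure_Icc_lt_top.ne
    refine hgbig.mono' hgmeas.aestronglyMeasurable ?_
    refine Filter.Eventually.of_forall fun u => ?_
    by_cases hu : u ∈ S k
    · have hu1 : u ∈ Set.Icc a b := hu.1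
      have hu2 : l u ≤ (k:ℝ) := hu.2
      simp only [Set.indicator_apply, hu, if_pos, hu1, if_pos, Real.norm_eq_abs]
      rw [abs_of_nonneg (hlnonneg u)]
      simpa [hu1] using hu2
    · simp only [Set.indicator_of_notMem hu, Real.norm_eq_abs, abs_zero]
      by_cases hu1 : u ∈ Set.Icc a b <;> simp [hu1]
  -- lintegral bound via monotone convergence
  have hlin : (∫⁻ u, ENNReal.ofReal (Set.indicator (Set.Icc a b) l u)) ≤ ENNReal.ofReal T := by
    have hmono : Monotone (fun k : ℕ => fun u => ENNReal.ofReal (Set.indicator (S k) l u)) := by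
      intro k1 k2 hk u
      apply ENNReal.ofReal_le_ofReal
      by_cases hu : u ∈ S k1
      · have hk' : (k1 : ℝ) ≤ (k2 : ℝ) := Nat.cast_le.mpr hk
        have hu2 : u ∈ S k2 := ⟨hu.1, le_trans hu.2 hk'⟩
        simp [Set.indicator_apply, hu, hu2]
      · simp only [Set.indicator_of_notMem hu]
        by_cases hu2 : u ∈ S k2
        · simp [Set.indicator_apply, hu2, hlnonneg u]
        · simp [Set.indicator_of_notMem hu2]
    have hmeask : ∀ k : ℕ, Measurable fun u => ENNReal.ofReal (Set.indicator (S k) l u) :=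
      fun k => ENNReal.measurable_ofReal.comp (hlmeas.indicator (hSmeas k))
    have hsup : (fun u => ENNReal.ofReal (Set.indicator (Set.Icc a b) l u))
        = fun u => ⨆ k : ℕ, ENNReal.ofReal (Set.indicator (S k) l u) := by
      funext u
      by_cases hu : u ∈ Set.Icc a b
      · obtain ⟨k0, hk0⟩ := exists_nat_ge (l u)
        have hmem : u ∈ S k0 := ⟨hu, hk0⟩
        apply le_antisymm
        · refine le_trans ?_ (le_iSup _ k0)
          simp [Set.indicator_apply, hu, hmem]
        · refine iSup_le fun k => ?_
          apply ENNReal.ofReal_le_ofReal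
          by_cases hk : u ∈ S k
          · simp [Set.indicator_apply, hu, hk]
          · simp [Set.indicator_of_notMem hk, Set.indicator_apply, hu, hlnonneg u]
      · have : ∀ k, u ∉ S k := fun k hk => hu hk.1
        simp [Set.indicator_of_notMem hu, Set.indicator_of_notMem (this _)]
    rw [hsup, MeasureTheory.lintegral_iSup hmeask hmono]
    refine iSup_le fun k => ?_
    have h1 : (∫⁻ u, ENNReal.ofReal (Set.indicator (S k) l u)) 
        = ENNReal.ofReal (∫ u, Set.indicator (S k) l u) := by
      rw [MeasureTheory.ofReal_integral_eq_lintegral_ofReal (hSint k)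
        (Filter.Eventually.of_forall fun u => ?_)]
      by_cases hu : u ∈ S k <;> simp [Set.indicator_apply, hu, hlnonneg u]
    rw [h1]
    exact ENNReal.ofReal_le_ofReal (hkey k)
  -- conclude integrability
  rw [← integrable_indicator_iff measurableSet_Icc]
  constructor
  · exact (hlmeas.indicator measurableSet_Icc).aestronglyMeasurable
  · rw [hasFiniteIntegral_iff_ofReal (Filter.Eventually.of_forall fun u => ?_)]
    · exact lt_of_le_of_lt hlin ENNReal.ofReal_lt_top
    · by_cases hu : u ∈ Set.Icc a b <;> simp [Set.indicator_apply, hu, hlnonneg u]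


set_option maxHeartbeats 1000000 in
/-- Assume `l` is an occupation density for `X` on `[0,T]` with `inf_{x∈I} l(x) ≥ νT/|I|`
for some `ν ∈ (0,1]`, and let `0 < h ≤ (2/3)|I|/Δ`.  Then for every `x ∈ I` the matrix
`B(x,h)` is positive definite and
`λ_min(B(x,h)) ≥ (νT/|I|)·K_min·min(λ_min(∫₀^{Δ/2} UUᵀ), λ_min(∫_{−Δ/2}^0 UUᵀ))
               = 2·A_K·νT/|I| > 0`. -/
theorem stmt_4 (m : ℕ) (T : ℝ) (hT : 0 < T)
    (X : ℝ → ℝ) (hX : Measurable X)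
    (c d : ℝ) (hcd : c < d)
    (K : ℝ → ℝ) (hKmeas : Measurable K) (CK : ℝ) (hKbdd : ∀ u, |K u| ≤ CK)
    (hKsupp : ∀ u, u ∉ Set.Icc (-1 : ℝ) 1 → K u = 0)
    (Kmin Δ : ℝ) (hKmin : 0 < Kmin) (hΔ : 0 < Δ)
    (hKlow : ∀ u : ℝ, (if |u| ≤ Δ then Kmin else 0) ≤ K u)
    (U : ℝ → Fin (m + 1) → ℝ)
    (hU : ∀ z i, U z i = z ^ (i : ℕ) / (Nat.factorial i : ℝ))
    (Kh : ℝ → ℝ → ℝ) (hKh : ∀ h u, Kh h u = h⁻¹ * K (u / h))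
    (B : ℝ → ℝ → Matrix (Fin (m + 1)) (Fin (m + 1)) ℝ)
    (hB : ∀ x h, B x h = Matrix.of fun i j =>
      ∫ s in (0 : ℝ)..T, U ((X s - x) / h) i * U ((X s - x) / h) j * Kh h (X s - x) *
        Set.indicator (Set.Icc c d) (fun _ => (1 : ℝ)) (X s))
    (lamMin : Matrix (Fin (m + 1)) (Fin (m + 1)) ℝ → ℝ)
    (hlamMin : ∀ (M : Matrix (Fin (m + 1)) (Fin (m + 1)) ℝ) (hM : M.IsHermitian),
      lamMin M = ⨅ i, hM.eigenvalues i)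
    (M1 M2 : Matrix (Fin (m + 1)) (Fin (m + 1)) ℝ)
    (hM1 : M1 = Matrix.of fun i j => ∫ u in (0 : ℝ)..(Δ / 2), U u i * U u j)
    (hM2 : M2 = Matrix.of fun i j => ∫ u in (-(Δ / 2))..(0 : ℝ), U u i * U u j)
    (AK : ℝ) (hAK : AK = Kmin / 2 * min (lamMin M1) (lamMin M2))
    (l : ℝ → ℝ) (hlmeas : Measurable l) (hlnonneg : ∀ u, 0 ≤ l u)
    (hocc : ∀ f : ℝ → ℝ, Measurable f → (∃ C, ∀ u, |f u| ≤ C) →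
      (∫ s in (0 : ℝ)..T, f (X s)) = ∫ u, f u * l u)
    (ν : ℝ) (hν : 0 < ν) (hν1 : ν ≤ 1)
    (hinf : ∀ x ∈ Set.Icc c d, ν * T / (d - c) ≤ l x)
    (h : ℝ) (hh : 0 < h) (hhle : h ≤ 2 / 3 * ((d - c) / Δ)) :
    ∀ x ∈ Set.Icc c d,
      (B x h).PosDef ∧
      ν * T / (d - c) * Kmin * min (lamMin M1) (lamMin M2) ≤ lamMin (B x h) ∧
      ν * T / (d - c) * Kmin * min (lamMin M1) (lamMin M2) = 2 * AK * ν * T / (d - c) ∧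
      0 < 2 * AK * ν * T / (d - c) := by
  intro x hx
  have hdc : (0:ℝ) < d - c := sub_pos.mpr hcd
  have hCK0 : (0:ℝ) ≤ CK := le_trans (abs_nonneg _) (hKbdd 0)
  have hK0 : ∀ u, 0 ≤ K u := by
    intro u
    refine le_trans ?_ (hKlow u)
    split_ifs
    · exact hKmin.le
    · exact le_refl 0
  have hβ : 0 < ν * T / (d - c) := by positivity
  have hM1h : M1.IsHermitian := by rw [hM1]; exact gram_herm U 0 (Δ/2)
  have hM2h : M2.IsHermitian := by rw [hM2]; exact gram_herm U (-(Δ/2)) 0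
  have hsum_eq : ∀ (v : Fin (m+1) → ℝ) (w : ℝ),
      (∑ i, v i * U w i) = ∑ i, v i * (w ^ (i:ℕ) / (Nat.factorial (i:ℕ) : ℝ)) :=
    fun v w => Finset.sum_congr rfl fun i _ => by rw [hU]
  have hquad1 : ∀ v : Fin (m+1) → ℝ,
      v ⬝ᵥ (M1 *ᵥ v) = ∫ w in (0:ℝ)..(Δ/2), (∑ i, v i * U w i)^2 := by
    intro v; rw [hM1]; exact gram_quad U hU 0 (Δ/2) v
  have hquad2 : ∀ v : Fin (m+1) → ℝ,
      v ⬝ᵥ (M2 *ᵥ v) = ∫ w in (-(Δ/2))..(0:ℝ), (∑ i, v i * U w i)^2 := by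
    intro v; rw [hM2]; exact gram_quad U hU (-(Δ/2)) 0 v
  have hpos_int : ∀ (v : Fin (m+1) → ℝ), v ≠ 0 → ∀ a b : ℝ, a < b →
      0 < ∫ w in a..b, (∑ i, v i * U w i)^2 := by
    intro v hv a b hab
    have h1 : (∫ w in a..b, (∑ i, v i * U w i)^2)
        = ∫ w in a..b, (∑ i, v i * (w ^ (i:ℕ) / (Nat.factorial (i:ℕ) : ℝ)))^2 := by
      apply intervalIntegral.integral_congr
      intro w _
      dsimp only
      rw [hsum_eq v w]
    rw [h1]
    exact sq_int_pos v hv a b hab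
  have hlam1 : 0 < lamMin M1 := by
    rw [hlamMin M1 hM1h]
    exact lam_pos M1 hM1h fun v hv => by
      rw [hquad1 v]; exact hpos_int v hv 0 (Δ/2) (by linarith)
  have hlam2 : 0 < lamMin M2 := by
    rw [hlamMin M2 hM2h]
    exact lam_pos M2 hM2h fun v hv => by
      rw [hquad2 v]; exact hpos_int v hv (-(Δ/2)) 0 (by linarith)
  have hminpos : 0 < min (lamMin M1) (lamMin M2) := lt_min hlam1 hlam2
  have hUbd : ∀ z : ℝ, |z| ≤ 1 → ∀ i : Fin (m+1), |U z i| ≤ 1 := by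
    intro z hz i
    rw [hU, abs_div, abs_pow, Nat.abs_cast]
    have hfac : (1:ℝ) ≤ ((Nat.factorial (i:ℕ) : ℕ) : ℝ) := by
      exact_mod_cast Nat.one_le_iff_ne_zero.mpr (Nat.factorial_ne_zero (i:ℕ))
    have hp : |z| ^ (i:ℕ) ≤ 1 := pow_le_one₀ (abs_nonneg _) hz
    rw [div_le_one (by linarith)]
    exact hp.trans hfac
  have hKh_abs : ∀ w : ℝ, |Kh h w| ≤ h⁻¹ * CK := by
    intro w
    rw [hKh, abs_mul, abs_inv, abs_of_pos hh]
    exact mul_le_mul_of_nonneg_left (hKbdd _) (inv_pos.mpr hh).le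
  have hKh_zero : ∀ w : ℝ, ¬ |w / h| ≤ 1 → Kh h w = 0 := by
    intro w hw
    rw [hKh, hKsupp (w/h) (fun hmem => hw (abs_le.mpr ⟨hmem.1, hmem.2⟩)), mul_zero]
  have hKh_nonneg : ∀ w : ℝ, 0 ≤ Kh h w := by
    intro w
    rw [hKh]
    exact mul_nonneg (inv_pos.mpr hh).le (hK0 _)
  -- the main lower bound
  have main_bound : ∀ (v : Fin (m+1) → ℝ) (wlo whi : ℝ), wlo ≤ whi →
      (∀ w ∈ Set.Icc wlo whi, |w| ≤ Δ) → c ≤ x + h * wlo → x + h * whi ≤ d →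
      ν * T / (d - c) * Kmin * (∫ w in wlo..whi, (∑ i, v i * U w i)^2)
        ≤ v ⬝ᵥ (B x h *ᵥ v) := by
    intro v wlo whi hwl hwΔ hJc hJd
    set P : ℝ → ℝ := fun w => ∑ i, v i * U w i with hP
    set ind : ℝ → ℝ := fun u => Set.indicator (Set.Icc c d) (fun _ => (1:ℝ)) u with hind
    have hind01 : ∀ u, ind u = if u ∈ Set.Icc c d then 1 else 0 := by
      intro u; simp only [hind, Set.indicator_apply]
    set F : ℝ → ℝ := fun u => (P ((u - x)/h))^2 * (Kh h (u - x) * ind u) with hF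
    have hmeasUw : ∀ i : Fin (m+1), Measurable fun w : ℝ => U w i := by
      intro i
      have he : (fun w : ℝ => U w i) = fun w : ℝ => w ^ (i:ℕ) / ((Nat.factorial (i:ℕ) : ℕ) : ℝ) :=
        funext fun w => hU w i
      rw [he]
      exact (measurable_id.pow_const _).div_const _
    have hzu : Measurable fun u : ℝ => (u - x)/h := (measurable_id.sub measurable_const).div_const h
    have hzs : Measurable fun s : ℝ => (X s - x)/h := (hX.sub measurable_const).div_const h
    have hmeasP : Measurable P := by
      apply Finset.measurable_sum
      intro i _
      exact measurable_const.mul (hmeasUw i)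
    have hmeasKhu : Measurable fun u : ℝ => Kh h (u - x) := by
      have he : (fun u : ℝ => Kh h (u - x)) = fun u => h⁻¹ * K ((u - x)/h) :=
        funext fun u => hKh h (u - x)
      rw [he]
      exact measurable_const.mul (hKmeas.comp hzu)
    have hindmeas : Measurable ind := measurable_const.indicator measurableSet_Icc
    have hFmeas : Measurable F := ((hmeasP.comp hzu).pow_const 2).mul (hmeasKhu.mul hindmeas)
    have hind_bd : ∀ u, 0 ≤ ind u ∧ ind u ≤ 1 := by
      intro u; rw [hind01]; split_ifs <;> norm_num
    have hPabs : ∀ w : ℝ, |w| ≤ 1 → |P w| ≤ ∑ i, |v i| := by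
      intro w hw
      refine le_trans (Finset.abs_sum_le_sum_abs _ _) (Finset.sum_le_sum fun i _ => ?_)
      rw [abs_mul]
      calc |v i| * |U w i| ≤ |v i| * 1 := mul_le_mul_of_nonneg_left (hUbd w hw i) (abs_nonneg _)
        _ = |v i| := mul_one _
    have hCF0 : 0 ≤ (∑ i, |v i|)^2 * (h⁻¹ * CK) :=
      mul_nonneg (sq_nonneg _) (mul_nonneg (inv_pos.mpr hh).le hCK0)
    have hFbd : ∀ u, |F u| ≤ (∑ i, |v i|)^2 * (h⁻¹ * CK) := by
      intro u
      by_cases hz1 : |(u - x)/h| ≤ 1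
      · have h1 : |P ((u-x)/h)|^2 ≤ (∑ i, |v i|)^2 :=
          pow_le_pow_left₀ (abs_nonneg _) (hPabs _ hz1) 2
        have h2 : |Kh h (u - x) * ind u| ≤ h⁻¹ * CK := by
          rw [abs_mul]
          calc |Kh h (u-x)| * |ind u| ≤ (h⁻¹ * CK) * 1 :=
              mul_le_mul (hKh_abs _) (by
                rw [abs_of_nonneg (hind_bd u).1]; exact (hind_bd u).2) (abs_nonneg _)
                (mul_nonneg (inv_pos.mpr hh).le hCK0)
            _ = h⁻¹ * CK := mul_one _
        calc |F u| = |P ((u-x)/h)|^2 * |Kh h (u - x) * ind u| := by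
              rw [show F u = (P ((u-x)/h))^2 * (Kh h (u-x) * ind u) from rfl, abs_mul, abs_pow]
          _ ≤ (∑ i, |v i|)^2 * (h⁻¹ * CK) := mul_le_mul h1 h2 (abs_nonneg _) (sq_nonneg _)
      · have hF0 : F u = 0 := by
          rw [show F u = (P ((u-x)/h))^2 * (Kh h (u-x) * ind u) from rfl, hKh_zero _ hz1]
          ring
        rw [hF0, abs_zero]
        exact hCF0
    have hFnn : ∀ u, 0 ≤ F u := fun u =>
      mul_nonneg (sq_nonneg _) (mul_nonneg (hKh_nonneg _) (hind_bd u).1)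
    -- entries of B
    have hBij : ∀ i j, (B x h) i j = ∫ s in (0:ℝ)..T,
        U ((X s - x)/h) i * U ((X s - x)/h) j * Kh h (X s - x) * ind (X s) := by
      intro i j
      rw [hB]
      rfl
    have hei : ∀ i j : Fin (m+1), IntervalIntegrable (fun s =>
        U ((X s - x)/h) i * U ((X s - x)/h) j * Kh h (X s - x) * ind (X s)) volume 0 T := by
      intro i j
      apply bdd_meas_intInt _ ((((hmeasUw i).comp hzs).mul ((hmeasUw j).comp hzs)).mul
        (by
          have he : (fun s : ℝ => Kh h (X s - x)) = fun s => h⁻¹ * K ((X s - x)/h) :=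
            funext fun s => hKh h (X s - x)
          exact he ▸ measurable_const.mul (hKmeas.comp hzs))
        |>.mul (hindmeas.comp hX)) (h⁻¹ * CK)
      intro s
      by_cases hz1 : |(X s - x)/h| ≤ 1
      · have e1 : |U ((X s - x)/h) i * U ((X s - x)/h) j| ≤ 1 := by
          rw [abs_mul]
          calc |U ((X s - x)/h) i| * |U ((X s - x)/h) j| ≤ 1 * 1 :=
              mul_le_mul (hUbd _ hz1 i) (hUbd _ hz1 j) (abs_nonneg _) zero_le_one
            _ = 1 := mul_one _
        have e2 : |Kh h (X s - x) * ind (X s)| ≤ h⁻¹ * CK := by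
          rw [abs_mul]
          calc |Kh h (X s - x)| * |ind (X s)| ≤ (h⁻¹ * CK) * 1 :=
              mul_le_mul (hKh_abs _) (by
                rw [abs_of_nonneg (hind_bd _).1]; exact (hind_bd _).2) (abs_nonneg _)
                (mul_nonneg (inv_pos.mpr hh).le hCK0)
            _ = h⁻¹ * CK := mul_one _
        calc |U ((X s - x)/h) i * U ((X s - x)/h) j * Kh h (X s - x) * ind (X s)|
            = |U ((X s - x)/h) i * U ((X s - x)/h) j| * |Kh h (X s - x) * ind (X s)| := by
              rw [← abs_mul]; congr 1; ring
          _ ≤ 1 * (h⁻¹ * CK) := mul_le_mul e1 e2 (abs_nonneg _) zero_le_one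
          _ = h⁻¹ * CK := one_mul _
      · show |U ((X s - x)/h) i * U ((X s - x)/h) j * Kh h (X s - x) * ind (X s)| ≤ h⁻¹ * CK
        rw [hKh_zero _ hz1]
        simpa using mul_nonneg (inv_pos.mpr hh).le hCK0
    -- quadratic form as time integral
    have hQ : v ⬝ᵥ (B x h *ᵥ v) = ∫ s in (0:ℝ)..T, F (X s) := by
      rw [dot_mulVec_expand]
      have hterm : ∀ i j : Fin (m+1), v i * ((B x h) i j * v j)
          = ∫ s in (0:ℝ)..T, ((v i * U ((X s - x)/h) i) * (v j * U ((X s - x)/h) j))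
              * (Kh h (X s - x) * ind (X s)) := by
        intro i j
        rw [hBij i j, ← intervalIntegral.integral_mul_const, ← intervalIntegral.integral_const_mul]
        congr 1
        funext s
        ring
      have hgint : ∀ i j : Fin (m+1), IntervalIntegrable (fun s =>
          ((v i * U ((X s - x)/h) i) * (v j * U ((X s - x)/h) j))
            * (Kh h (X s - x) * ind (X s))) volume 0 T := by
        intro i j
        have he : (fun s => ((v i * U ((X s - x)/h) i) * (v j * U ((X s - x)/h) j))
            * (Kh h (X s - x) * ind (X s)))
            = fun s => (v i * v j) * (U ((X s - x)/h) i * U ((X s - x)/h) j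
              * Kh h (X s - x) * ind (X s)) := funext fun s => by ring
        rw [he]
        exact (hei i j).const_mul _
      calc ∑ i, ∑ j, v i * ((B x h) i j * v j)
          = ∑ i, ∑ j, ∫ s in (0:ℝ)..T, ((v i * U ((X s - x)/h) i) * (v j * U ((X s - x)/h) j))
              * (Kh h (X s - x) * ind (X s)) :=
            Finset.sum_congr rfl fun i _ => Finset.sum_congr rfl fun j _ => hterm i j
        _ = ∫ s in (0:ℝ)..T, ∑ i, ∑ j, ((v i * U ((X s - x)/h) i) * (v j * U ((X s - x)/h) j))
              * (Kh h (X s - x) * ind (X s)) :=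
            sum_swap_int _ 0 T hgint
        _ = ∫ s in (0:ℝ)..T, F (X s) := by
            apply intervalIntegral.integral_congr
            intro s _
            dsimp only
            symm
            rw [show F (X s) = (P ((X s - x)/h))^2 * (Kh h (X s - x) * ind (X s)) from rfl,
              hP, pow_two, Finset.sum_mul_sum, Finset.sum_mul]
            exact Finset.sum_congr rfl fun i _ => by rw [Finset.sum_mul]
    -- occupation density
    have hocc_F := hocc F hFmeas ⟨(∑ i, |v i|)^2 * (h⁻¹ * CK), hFbd⟩
    -- lower bound function
    set G : ℝ → ℝ := Set.indicator (Set.Icc (x + h * wlo) (x + h * whi))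
      (fun u => (ν * T / (d - c) * (Kmin * h⁻¹)) * (P ((u - x)/h))^2) with hG
    have ha'b' : x + h * wlo ≤ x + h * whi := by nlinarith
    have hGle : ∀ u, G u ≤ F u * l u := by
      intro u
      by_cases hu : u ∈ Set.Icc (x + h * wlo) (x + h * whi)
      · have hz_mem : (u - x)/h ∈ Set.Icc wlo whi := by
          constructor
          · rw [le_div_iff₀ hh]
            nlinarith [hu.1]
          · rw [div_le_iff₀ hh]
            nlinarith [hu.2]
        have hKge : Kmin ≤ K ((u - x)/h) := by
          have hKl := hKlow ((u - x)/h)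
          rwa [if_pos (hwΔ _ hz_mem)] at hKl
        have hucd : u ∈ Set.Icc c d := ⟨le_trans hJc hu.1, le_trans hu.2 hJd⟩
        have hind1 : ind u = 1 := by rw [hind01, if_pos hucd]
        have hlu : ν * T / (d - c) ≤ l u := hinf u hucd
        have hPz2 : (0:ℝ) ≤ (P ((u - x)/h))^2 := sq_nonneg _
        have s1 : Kmin * h⁻¹ ≤ K ((u - x)/h) * h⁻¹ :=
          mul_le_mul_of_nonneg_right hKge (inv_pos.mpr hh).le
        have s2 : (ν * T / (d - c)) * (Kmin * h⁻¹) ≤ l u * (K ((u - x)/h) * h⁻¹) :=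
          mul_le_mul hlu s1 (mul_nonneg hKmin.le (inv_pos.mpr hh).le) (hlnonneg u)
        calc G u = (ν * T / (d - c) * (Kmin * h⁻¹)) * (P ((u - x)/h))^2 := by
              rw [hG, Set.indicator_of_mem hu]
          _ ≤ (l u * (K ((u - x)/h) * h⁻¹)) * (P ((u - x)/h))^2 :=
              mul_le_mul_of_nonneg_right s2 hPz2
          _ = (P ((u - x)/h))^2 * (Kh h (u - x) * ind u) * l u := by
              rw [hind1, hKh]; ring
          _ = F u * l u := rfl
      · rw [hG, Set.indicator_of_notMem hu]
        exact mul_nonneg (hFnn u) (hlnonneg u)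
    have hPcont : Continuous fun u : ℝ => P ((u - x)/h) := by
      show Continuous fun u : ℝ => ∑ i, v i * U ((u - x)/h) i
      apply continuous_finset_sum
      intro i _
      have he : (fun u : ℝ => v i * U ((u - x)/h) i)
          = fun u : ℝ => v i * (((u - x)/h) ^ (i:ℕ) / ((Nat.factorial (i:ℕ) : ℕ) : ℝ)) :=
        funext fun u => by rw [hU]
      rw [he]
      exact continuous_const.mul ((((continuous_id.sub continuous_const).div_const h).pow _).div_const _)
    have hGint : Integrable G := by
      rw [hG, integrable_indicator_iff measurableSet_Icc]
      exact (continuous_const.mul (hPcont.pow 2)).integrableOn_Icc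
    have hFlint : Integrable (fun u => F u * l u) := by
      have hlicc : IntegrableOn l (Set.Icc (x - h) (x + h)) volume :=
        occ_loc_int T hT X hX l hlmeas hlnonneg hocc (x - h) (x + h)
      have hdom : Integrable (fun u => ((∑ i, |v i|)^2 * (h⁻¹ * CK)) *
          Set.indicator (Set.Icc (x - h) (x + h)) l u) :=
        ((integrable_indicator_iff measurableSet_Icc).mpr hlicc).const_mul _
      refine hdom.mono' ((hFmeas.mul hlmeas)).aestronglyMeasurable ?_
      refine Filter.Eventually.of_forall fun u => ?_
      by_cases hmem : u ∈ Set.Icc (x - h) (x + h)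
      · rw [Set.indicator_of_mem hmem, Real.norm_eq_abs, abs_mul, abs_of_nonneg (hlnonneg u)]
        exact mul_le_mul_of_nonneg_right (hFbd u) (hlnonneg u)
      · have hz1 : ¬ |(u - x)/h| ≤ 1 := by
          intro hcon
          rw [abs_div, abs_of_pos hh, div_le_one hh] at hcon
          have habs := abs_le.mp hcon
          exact hmem ⟨by linarith [habs.1], by linarith [habs.2]⟩
        have hF0 : F u = 0 := by
          rw [show F u = (P ((u - x)/h))^2 * (Kh h (u - x) * ind u) from rfl, hKh_zero _ hz1]
          ring
        rw [hF0, Set.indicator_of_notMem hmem]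
        simp
    have hint_mono : ∫ u, G u ≤ ∫ u, F u * l u := integral_mono hGint hFlint hGle
    have hGval : ∫ u, G u = ν * T / (d - c) * Kmin * ∫ w in wlo..whi, (P w)^2 := by
      rw [hG, integral_indicator measurableSet_Icc, MeasureTheory.integral_Icc_eq_integral_Ioc,
        ← intervalIntegral.integral_of_le ha'b', intervalIntegral.integral_const_mul]
      have hsub : (∫ u in (x + h*wlo)..(x + h*whi), (P ((u - x)/h))^2)
          = ∫ u in (h*wlo)..(h*whi), (P (u/h))^2 := by
        have hcv := intervalIntegral.integral_comp_sub_right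
          (a := x + h*wlo) (b := x + h*whi) (fun u => (P (u/h))^2) x
        rw [add_sub_cancel_left, add_sub_cancel_left] at hcv
        exact hcv
      have hdiv : (∫ u in (h*wlo)..(h*whi), (P (u/h))^2) = h * ∫ w in wlo..whi, (P w)^2 := by
        have hcv := intervalIntegral.integral_comp_div
          (a := h*wlo) (b := h*whi) (c := h) (f := fun w => (P w)^2) hh.ne'
        rw [mul_div_cancel_left₀ _ hh.ne', mul_div_cancel_left₀ _ hh.ne', smul_eq_mul] at hcv
        exact hcv
      rw [hsub, hdiv]
      field_simp
    calc ν * T / (d - c) * Kmin * (∫ w in wlo..whi, (P w)^2) = ∫ u, G u := hGval.symm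
      _ ≤ ∫ u, F u * l u := hint_mono
      _ = ∫ s in (0:ℝ)..T, F (X s) := hocc_F.symm
      _ = v ⬝ᵥ (B x h *ᵥ v) := hQ.symm
  -- B is Hermitian
  have hBh : (B x h).IsHermitian := by
    rw [hB]
    ext i j
    simp only [Matrix.conjTranspose_apply, Matrix.of_apply, star_trivial]
    exact intervalIntegral.integral_congr fun s _ => by ring
  -- key quadratic-form bound
  have hhΔ : h * Δ ≤ 2/3 * (d - c) := by
    have h1 := mul_le_mul_of_nonneg_right hhle hΔ.le
    calc h * Δ ≤ 2/3 * ((d - c)/Δ) * Δ := h1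
      _ = 2/3 * (d - c) := by field_simp
  have key : ∀ v : Fin (m+1) → ℝ,
      ν * T / (d - c) * Kmin * min (lamMin M1) (lamMin M2) * (v ⬝ᵥ v)
        ≤ v ⬝ᵥ (B x h *ᵥ v) := by
    intro v
    have hvv : (0:ℝ) ≤ v ⬝ᵥ v := Finset.sum_nonneg fun i _ => mul_self_nonneg _
    have hβK : (0:ℝ) ≤ ν * T / (d - c) * Kmin := mul_nonneg hβ.le hKmin.le
    by_cases hcase : x + h * (Δ/2) ≤ d
    · have hmb := main_bound v 0 (Δ/2) (by linarith)
        (fun w hw => abs_le.mpr ⟨by linarith [hw.1], by linarith [hw.2]⟩)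
        (by rw [mul_zero, add_zero]; exact hx.1) hcase
      have hq1 : lamMin M1 * (v ⬝ᵥ v) ≤ v ⬝ᵥ (M1 *ᵥ v) := by
        rw [hlamMin M1 hM1h]; exact ray_lower M1 hM1h v
      have hmin : min (lamMin M1) (lamMin M2) * (v ⬝ᵥ v) ≤ lamMin M1 * (v ⬝ᵥ v) :=
        mul_le_mul_of_nonneg_right (min_le_left _ _) hvv
      calc ν * T / (d - c) * Kmin * min (lamMin M1) (lamMin M2) * (v ⬝ᵥ v)
          = ν * T / (d - c) * Kmin * (min (lamMin M1) (lamMin M2) * (v ⬝ᵥ v)) := by ring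
        _ ≤ ν * T / (d - c) * Kmin * (∫ w in (0:ℝ)..(Δ/2), (∑ i, v i * U w i)^2) :=
            mul_le_mul_of_nonneg_left (le_trans hmin (le_trans hq1 (le_of_eq (hquad1 v)))) hβK
        _ ≤ v ⬝ᵥ (B x h *ᵥ v) := hmb
    · push_neg at hcase
      have e1 : h * (Δ/2) = (h*Δ)/2 := by ring
      have e2 : h * (-(Δ/2)) = -((h*Δ)/2) := by ring
      have hmb := main_bound v (-(Δ/2)) 0 (by linarith)
        (fun w hw => abs_le.mpr ⟨by linarith [hw.1], by linarith [hw.2]⟩)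
        (by
          have hxd := hx.2
          rw [e2]
          rw [e1] at hcase
          linarith)
        (by rw [mul_zero, add_zero]; exact hx.2)
      have hq2 : lamMin M2 * (v ⬝ᵥ v) ≤ v ⬝ᵥ (M2 *ᵥ v) := by
        rw [hlamMin M2 hM2h]; exact ray_lower M2 hM2h v
      have hmin : min (lamMin M1) (lamMin M2) * (v ⬝ᵥ v) ≤ lamMin M2 * (v ⬝ᵥ v) :=
        mul_le_mul_of_nonneg_right (min_le_right _ _) hvv
      calc ν * T / (d - c) * Kmin * min (lamMin M1) (lamMin M2) * (v ⬝ᵥ v)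
          = ν * T / (d - c) * Kmin * (min (lamMin M1) (lamMin M2) * (v ⬝ᵥ v)) := by ring
        _ ≤ ν * T / (d - c) * Kmin * (∫ w in (-(Δ/2))..(0:ℝ), (∑ i, v i * U w i)^2) :=
            mul_le_mul_of_nonneg_left (le_trans hmin (le_trans hq2 (le_of_eq (hquad2 v)))) hβK
        _ ≤ v ⬝ᵥ (B x h *ᵥ v) := hmb
  have hαpos : 0 < ν * T / (d - c) * Kmin * min (lamMin M1) (lamMin M2) :=
    mul_pos (mul_pos hβ hKmin) hminpos
  have hAKpos : 0 < AK := by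
    rw [hAK]
    exact mul_pos (by linarith) hminpos
  refine ⟨posDef_iff_dotProduct_mulVec.mpr ⟨hBh, ?_⟩, ?_, ?_, ?_⟩
  · intro v hv
    rw [star_trivial]
    have hvpos : 0 < v ⬝ᵥ v := by
      rcases (Finset.sum_nonneg fun i (_ : i ∈ Finset.univ) => mul_self_nonneg (v i)).lt_or_eq
        with hlt | heq
      · exact hlt
      · exact absurd (dotProduct_self_eq_zero.mp heq.symm) hv
    exact lt_of_lt_of_le (mul_pos hαpos hvpos) (key v)
  · rw [hlamMin (B x h) hBh]
    exact ray_min (B x h) hBh _ key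
  · rw [hAK]; ring
  · apply div_pos
    · exact mul_pos (mul_pos (mul_pos two_pos hAKpos) hν) hT
    · exact hdc
end

section
/- Let J ⊆ ℝ be an interval, β > 0, l = ⌊β⌋, L > 0, and let q : J → ℝ be l-times differentiable with |q^{(l)}(x) − q^{(l)}(y)| ≤ L|x−y|^{β−l} for all x, y ∈ J. Then for all x, y ∈ J, |q(y) − Σ_{k=0}^{l} q^{(k)}(x)·(y−x)^k/k!| ≤ L·|y−x|^β / l!. -/
open Set Finset

/-- Mean value / fencing estimate with a variable bound. -/
lemma key_mvt (a b : ℝ) (hab : a ≤ b) (g g' B B' : ℝ → ℝ)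
    (hg : ∀ t ∈ Set.Icc a b, HasDerivWithinAt g (g' t) (Set.Icc a b) t)
    (hB : ∀ t, HasDerivAt B (B' t) t) (hBa : B a = 0)
    (bound : ∀ t ∈ Set.Ico a b, |g' t| ≤ B' t) :
    |g b - g a| ≤ B b := by
  have hgc : ContinuousOn g (Icc a b) := fun t ht => (hg t ht).continuousWithinAt
  have hfc : ContinuousOn (fun t => g t - g a) (Icc a b) := hgc.sub continuousOn_const
  have hf' : ∀ t ∈ Ico a b, HasDerivWithinAt (fun t => g t - g a) (g' t) (Ici t) t := by
    intro t ht
    exact ((hg t (Ico_subset_Icc_self ht)).sub_const _).mono_of_mem_nhdsWithin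
      (Icc_mem_nhdsGE_of_mem ht)
  have := image_norm_le_of_norm_deriv_right_le_deriv_boundary hfc hf'
    (by simp [hBa]) hB bound (right_mem_Icc.2 hab)
  simpa using this

lemma sum_deriv (J : Set ℝ) (D : ℕ → ℝ → ℝ) (l : ℕ)
    (hderiv : ∀ k < l, ∀ x ∈ J, HasDerivWithinAt (D k) (D (k + 1) x) J x)
    (y : ℝ) :
    ∀ n < l, ∀ t ∈ J, HasDerivWithinAt
      (fun s => ∑ k ∈ Finset.range (n + 1), D k s * (y - s) ^ k / (Nat.factorial k : ℝ))
      (D (n + 1) t * (y - t) ^ n / (Nat.factorial n : ℝ)) J t := by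
  intro n
  induction n with
  | zero =>
    intro hn t ht
    simpa using hderiv 0 hn t ht
  | succ n ih =>
    intro hn t ht
    have h1 := ih (Nat.lt_of_succ_lt hn) t ht
    have hpow : HasDerivAt (fun s : ℝ => (y - s) ^ (n + 1))
        ((n + 1 : ℕ) * (y - t) ^ n * (-1)) t := by
      simpa [Pi.pow_def, Pi.sub_def] using (((hasDerivAt_const t y).sub (hasDerivAt_id t)).pow (n + 1))
    have h2 : HasDerivWithinAt
        (fun s => D (n + 1) s * (y - s) ^ (n + 1) / (Nat.factorial (n + 1) : ℝ))
        ((D (n + 2) t * (y - t) ^ (n + 1) + D (n + 1) t * ((n + 1 : ℕ) * (y - t) ^ n * (-1)))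
          / (Nat.factorial (n + 1) : ℝ)) J t :=
      ((hderiv (n + 1) hn t ht).mul hpow.hasDerivWithinAt).div_const _
    have h3 := h1.add h2
    have heq : D (n + 1) t * (y - t) ^ n / (Nat.factorial n : ℝ)
        + (D (n + 2) t * (y - t) ^ (n + 1) + D (n + 1) t * ((n + 1 : ℕ) * (y - t) ^ n * (-1)))
          / (Nat.factorial (n + 1) : ℝ)
        = D (n + 2) t * (y - t) ^ (n + 1) / (Nat.factorial (n + 1) : ℝ) := by
      have h0 : (Nat.factorial n : ℝ) ≠ 0 := Nat.cast_ne_zero.2 n.factorial_ne_zero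
      have h0' : (Nat.factorial (n + 1) : ℝ) ≠ 0 := Nat.cast_ne_zero.2 (n + 1).factorial_ne_zero
      rw [Nat.factorial_succ]
      push_cast
      field_simp
      ring
    have hfun : ∀ s : ℝ, (∑ k ∈ Finset.range (n + 1), D k s * (y - s) ^ k / (Nat.factorial k : ℝ))
        + D (n + 1) s * (y - s) ^ (n + 1) / (Nat.factorial (n + 1) : ℝ)
        = ∑ k ∈ Finset.range (n + 2), D k s * (y - s) ^ k / (Nat.factorial k : ℝ) := by
      intro s; exact (Finset.sum_range_succ _ (n + 1)).symm
    have := h3.congr_deriv heq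
    simpa [hfun, Pi.add_def] using this

/-- Let `J ⊆ ℝ` be an interval, `β > 0`, `l = ⌊β⌋`, `L > 0`, and let `q : J → ℝ` be `l`-times
differentiable (with derivatives `D k`, `D 0 = q`) whose `l`-th derivative is `(β−l)`-Hölder
with constant `L` on `J`.  Then for all `x, y ∈ J`,
`|q(y) − Σ_{k=0}^{l} q^{(k)}(x)(y−x)^k/k!| ≤ L |y−x|^β / l!`. -/
theorem stmt_7 (J : Set ℝ) (hJ : J.OrdConnected)
    (β : ℝ) (hβ : 0 < β) (l : ℕ) (hl : l = ⌊β⌋₊) (L : ℝ) (hL : 0 < L)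
    (q : ℝ → ℝ) (D : ℕ → ℝ → ℝ) (hD0 : D 0 = q)
    (hderiv : ∀ k < l, ∀ x ∈ J, HasDerivWithinAt (D k) (D (k + 1) x) J x)
    (hHolder : ∀ x ∈ J, ∀ y ∈ J, |D l x - D l y| ≤ L * |x - y| ^ (β - (l : ℝ))) :
    ∀ x ∈ J, ∀ y ∈ J,
      |q y - ∑ k ∈ Finset.range (l + 1), D k x * (y - x) ^ k / (Nat.factorial k : ℝ)| ≤
        L * |y - x| ^ β / (Nat.factorial l : ℝ) := by
  intro x hx y hy
  -- exponent nonnegativity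
  have hβl : (0 : ℝ) ≤ β - (l : ℝ) := by
    have h1 : ((⌊β⌋₊ : ℕ) : ℝ) ≤ β := Nat.floor_le hβ.le
    rw [hl]; linarith
  by_cases hyx : y = x
  · subst hyx
    have hsum : ∑ k ∈ Finset.range (l + 1), D k y * (y - y) ^ k / (Nat.factorial k : ℝ)
        = q y := by
      rw [Finset.sum_eq_single 0]
      · simp [hD0]
      · intro k _ hk; simp [sub_self, zero_pow hk]
      · simp
    rw [hsum]
    simp [Real.zero_rpow hβ.ne']
  obtain _ | m := l
  · have h := hHolder y hy x hx
    simpa [hD0, abs_sub_comm] using h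
  -- main case: l = m + 1
  set gd : ℝ → ℝ := fun t => (D (m + 1) t - D (m + 1) x) * (y - t) ^ m / (Nat.factorial m : ℝ)
    with hgdd
  set g : ℝ → ℝ := fun s =>
      (∑ k ∈ Finset.range (m + 1), D k s * (y - s) ^ k / (Nat.factorial k : ℝ))
      + D (m + 1) x * (y - s) ^ (m + 1) / (Nat.factorial (m + 1) : ℝ) with hgdef
  have hfact0 : (Nat.factorial m : ℝ) ≠ 0 := Nat.cast_ne_zero.2 m.factorial_ne_zero
  have hfact1 : (Nat.factorial (m + 1) : ℝ) ≠ 0 := Nat.cast_ne_zero.2 (m + 1).factorial_ne_zero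
  have hgy : g y = q y := by
    rw [hgdef]
    simp only [sub_self]
    rw [Finset.sum_eq_single 0]
    · simp [hD0, zero_pow (Nat.succ_ne_zero m)]
    · intro k _ hk; simp [zero_pow hk]
    · simp
  have hgx : g x = ∑ k ∈ Finset.range (m + 1 + 1), D k x * (y - x) ^ k / (Nat.factorial k : ℝ) := by
    rw [hgdef, Finset.sum_range_succ]
  have hgd : ∀ t ∈ J, HasDerivWithinAt g (gd t) J t := by
    intro t ht
    have h1 := sum_deriv J D (m + 1) hderiv y m (Nat.lt_succ_self m) t ht
    have hpow : HasDerivAt (fun s : ℝ => D (m + 1) x * (y - s) ^ (m + 1) / (Nat.factorial (m + 1) : ℝ))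
        (D (m + 1) x * ((m + 1 : ℕ) * (y - t) ^ m * (-1)) / (Nat.factorial (m + 1) : ℝ)) t := by
      have := (((hasDerivAt_const t y).sub (hasDerivAt_id t)).pow (m + 1)).const_mul (D (m + 1) x)
      simpa using this.div_const (Nat.factorial (m + 1) : ℝ)
    have h3 := h1.add hpow.hasDerivWithinAt
    have heq : D (m + 1) t * (y - t) ^ m / (Nat.factorial m : ℝ)
        + D (m + 1) x * ((m + 1 : ℕ) * (y - t) ^ m * (-1)) / (Nat.factorial (m + 1) : ℝ)
        = gd t := by
      rw [hgdd, Nat.factorial_succ]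
      push_cast
      field_simp
      ring
    exact h3.congr_deriv heq
  -- reduce goal to an estimate on g
  rw [← hgy, ← hgx]
  have hne : y ≠ x := hyx
  rcases hne.lt_or_gt with hlt | hlt
  · -- y < x : work on [y, x]
    have hIcc : Icc y x ⊆ J := hJ.out hy hx
    have hpos : (0 : ℝ) < x - y := by linarith
    set C : ℝ := L * (x - y) ^ (β - ((m + 1 : ℕ) : ℝ)) with hC
    have hCpos : 0 < C := by
      rw [hC]; positivity
    have hBd : ∀ t : ℝ, HasDerivAt (fun s => C * (s - y) ^ (m + 1) / (Nat.factorial (m + 1) : ℝ))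
        (C * ((m + 1 : ℕ) * (t - y) ^ m) / (Nat.factorial (m + 1) : ℝ)) t := by
      intro t
      have := (((hasDerivAt_id t).sub (hasDerivAt_const t y)).pow (m + 1)).const_mul C
      simpa using this.div_const (Nat.factorial (m + 1) : ℝ)
    have hbound : ∀ t ∈ Ico y x, |gd t| ≤ C * ((m + 1 : ℕ) * (t - y) ^ m) / (Nat.factorial (m + 1) : ℝ) := by
      intro t ht
      have htJ : t ∈ J := hIcc (Ico_subset_Icc_self ht)
      have hty : (0 : ℝ) ≤ t - y := by linarith [ht.1]
      have h1 : |D (m + 1) t - D (m + 1) x| ≤ C := by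
        refine (hHolder t htJ x hx).trans ?_
        rw [hC]
        have h2 : |t - x| ≤ x - y := by
          rw [abs_of_nonpos (by linarith [ht.2] : t - x ≤ 0)]; linarith [ht.1]
        exact mul_le_mul_of_nonneg_left
          (Real.rpow_le_rpow (abs_nonneg _) h2 hβl) hL.le
      have h2 : |(y - t) ^ m| ≤ (t - y) ^ m := by
        rw [abs_pow, abs_sub_comm, abs_of_nonneg hty]
      calc |gd t| = |D (m + 1) t - D (m + 1) x| * |(y - t) ^ m| / (Nat.factorial m : ℝ) := by
            rw [hgdd, abs_div, abs_mul, Nat.abs_cast]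
        _ ≤ C * (t - y) ^ m / (Nat.factorial m : ℝ) := by
            gcongr
        _ = C * ((m + 1 : ℕ) * (t - y) ^ m) / (Nat.factorial (m + 1) : ℝ) := by
            rw [Nat.factorial_succ]
            push_cast
            field_simp
    have hkey := key_mvt y x (by linarith) g gd _ _
      (fun t ht => (hgd t (hIcc ht)).mono hIcc) hBd (by simp) hbound
    have hfin : C * (x - y) ^ (m + 1) / (Nat.factorial (m + 1) : ℝ)
        = L * |y - x| ^ β / (Nat.factorial (m + 1) : ℝ) := by
      rw [hC, abs_sub_comm, abs_of_pos hpos, ← Real.rpow_natCast (x - y) (m + 1),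
        mul_assoc, ← Real.rpow_add hpos]
      norm_num
    rw [abs_sub_comm]
    calc |g x - g y| ≤ C * (x - y) ^ (m + 1) / (Nat.factorial (m + 1) : ℝ) := hkey
      _ = _ := hfin
  · -- x < y : work on [x, y]
    have hIcc : Icc x y ⊆ J := hJ.out hx hy
    have hpos : (0 : ℝ) < y - x := by linarith
    set C : ℝ := L * (y - x) ^ (β - ((m + 1 : ℕ) : ℝ)) with hC
    have hBd : ∀ t : ℝ, HasDerivAt
        (fun s => C * ((y - x) ^ (m + 1) - (y - s) ^ (m + 1)) / (Nat.factorial (m + 1) : ℝ))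
        (C * ((m + 1 : ℕ) * (y - t) ^ m) / (Nat.factorial (m + 1) : ℝ)) t := by
      intro t
      have h0 := ((hasDerivAt_const t ((y - x) ^ (m + 1))).sub
        (((hasDerivAt_const t y).sub (hasDerivAt_id t)).pow (m + 1))).const_mul C
      have := h0.div_const (Nat.factorial (m + 1) : ℝ)
      simp only [Pi.sub_def, Pi.pow_def, Pi.sub_apply, id_eq, Nat.add_sub_cancel] at this
      refine this.congr_deriv ?_
      push_cast
      ring
    have hbound : ∀ t ∈ Ico x y, |gd t| ≤ C * ((m + 1 : ℕ) * (y - t) ^ m) / (Nat.factorial (m + 1) : ℝ) := by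
      intro t ht
      have htJ : t ∈ J := hIcc (Ico_subset_Icc_self ht)
      have hty : (0 : ℝ) ≤ y - t := by linarith [ht.2]
      have h1 : |D (m + 1) t - D (m + 1) x| ≤ C := by
        refine (hHolder t htJ x hx).trans ?_
        rw [hC]
        have h2 : |t - x| ≤ y - x := by
          rw [abs_of_nonneg (by linarith [ht.1] : (0:ℝ) ≤ t - x)]; linarith [ht.2]
        exact mul_le_mul_of_nonneg_left
          (Real.rpow_le_rpow (abs_nonneg _) h2 hβl) hL.le
      have h2 : |(y - t) ^ m| ≤ (y - t) ^ m := by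
        rw [abs_pow, abs_of_nonneg hty]
      calc |gd t| = |D (m + 1) t - D (m + 1) x| * |(y - t) ^ m| / (Nat.factorial m : ℝ) := by
            rw [hgdd, abs_div, abs_mul, Nat.abs_cast]
        _ ≤ C * (y - t) ^ m / (Nat.factorial m : ℝ) := by
            gcongr
        _ = C * ((m + 1 : ℕ) * (y - t) ^ m) / (Nat.factorial (m + 1) : ℝ) := by
            rw [Nat.factorial_succ]
            push_cast
            field_simp
    have hkey := key_mvt x y (by linarith) g gd _ _
      (fun t ht => (hgd t (hIcc ht)).mono hIcc) hBd (by simp) hbound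
    have hfin : C * ((y - x) ^ (m + 1) - (y - y) ^ (m + 1)) / (Nat.factorial (m + 1) : ℝ)
        = L * |y - x| ^ β / (Nat.factorial (m + 1) : ℝ) := by
      rw [hC, abs_of_pos hpos]
      rw [sub_self, zero_pow (Nat.succ_ne_zero m), sub_zero,
        ← Real.rpow_natCast (y - x) (m + 1), mul_assoc, ← Real.rpow_add hpos]
      norm_num
    calc |g y - g x| ≤ _ := hkey
      _ = _ := hfin
end

section
/- Assume in addition that K ≥ 0 on ℝ. Fix x ∈ I and h > 0 such that B(x,h) is positive definite. Let β > 0, L > 0 with l = ⌊β⌋ ≤ m, and let q ∈ Σ(β,L,I). Then |∫₀^T w(x,h,(X_s−x)/h) K_h(X_s−x) 1_{X_s∈I} (q(X_s) − q(x)) ds| ≤ (L·h^β/l!)·∫₀^T |w(x,h,(X_s−x)/h)| K_h(X_s−x) 1_{X_s∈I} ds. -/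
open MeasureTheory Matrix Set

lemma measurable_indicator_of_continuousOn {f : ℝ → ℝ} {s : Set ℝ}
    (hs : MeasurableSet s) (hf : ContinuousOn f s) : Measurable (s.indicator f) := by
  have h1 : Measurable (s.restrict f) := hf.restrict.measurable
  have h2 := (MeasurableEmbedding.subtype_coe hs).measurable_extend h1
    (measurable_const (a := (0:ℝ)))
  convert h2 using 1
  funext y
  by_cases hy : y ∈ s
  · rw [Set.indicator_of_mem hy]
    have : y = ((⟨y, hy⟩ : s) : ℝ) := rfl
    rw [this, Subtype.val_injective.extend_apply]
    rfl
  · rw [Set.indicator_of_notMem hy, Function.extend_apply']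
    rintro ⟨a, rfl⟩
    exact hy a.2

lemma taylor_aux : ∀ (n : ℕ) (E : ℕ → ℝ → ℝ) (a b M : ℝ), a ≤ b → 0 ≤ M →
    (∀ k < n, ∀ z ∈ Set.Icc a b, HasDerivWithinAt (E k) (E (k+1) z) (Set.Icc a b) z) →
    (∀ z ∈ Set.Icc a b, |E n z - E n a| ≤ M) →
    |E 0 b - ∑ k ∈ Finset.range (n+1), E k a * (b-a)^k / (Nat.factorial k : ℝ)| ≤
      M * (b-a)^n / (Nat.factorial n : ℝ) := by
  intro n
  induction n with
  | zero =>
    intro E a b M hab hM _ hbd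
    simpa using hbd b ⟨hab, le_rfl⟩
  | succ n IH =>
    intro E a b M hab hM hder hbd
    set S' : ℝ → ℝ := fun t => ∑ k ∈ Finset.range (n+1), E (k+1) a * (t-a)^k / (Nat.factorial k : ℝ) with hS'
    set G : ℝ → ℝ := fun t => E 0 t - ∑ k ∈ Finset.range (n+2), E k a * (t-a)^k / (Nat.factorial k : ℝ) with hG
    have hSder : ∀ t : ℝ, HasDerivAt
        (fun t => ∑ k ∈ Finset.range (n+2), E k a * (t-a)^k / (Nat.factorial k : ℝ)) (S' t) t := by
      intro t
      have : HasDerivAt (fun t => ∑ k ∈ Finset.range (n+2), E k a * (t-a)^k / (Nat.factorial k : ℝ))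
          (∑ k ∈ Finset.range (n+2), E k a * ((k:ℝ) * (t-a)^(k-1)) / (Nat.factorial k : ℝ)) t := by
        apply HasDerivAt.fun_sum
        intro k _
        have h1 : HasDerivAt (fun t : ℝ => (t-a)^k) ((k:ℝ) * (t-a)^(k-1)) t := by
          simpa [Function.comp_def] using ((hasDerivAt_pow k (t-a)).comp t ((hasDerivAt_id t).sub_const a))
        simpa [mul_div_assoc] using (h1.const_mul (E k a)).div_const (Nat.factorial k : ℝ)
      convert this using 1
      rw [hS', Finset.sum_range_succ' (fun k => E k a * ((k:ℝ) * (t-a)^(k-1)) / (Nat.factorial k : ℝ)) (n+1)]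
      simp only [Nat.cast_zero, zero_mul, mul_zero, zero_div, add_zero]
      apply Finset.sum_congr rfl
      intro k _
      have hfac : (Nat.factorial (k+1) : ℝ) = (k+1) * (Nat.factorial k : ℝ) := by
        push_cast [Nat.factorial_succ]; ring
      have hk1 : ((k:ℝ)+1) ≠ 0 := by positivity
      have hfk : (Nat.factorial k : ℝ) ≠ 0 := Nat.cast_ne_zero.2 (Nat.factorial_ne_zero k)
      field_simp [hfac]
      rw [Nat.add_sub_cancel, hfac]; push_cast; ring
    have hGder : ∀ t ∈ Set.Icc a b, HasDerivWithinAt G (E 1 t - S' t) (Set.Icc a b) t := by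
      intro t ht
      exact (hder 0 (Nat.succ_pos n) t ht).sub (hSder t).hasDerivWithinAt
    have hG'bd : ∀ t ∈ Set.Icc a b, |E 1 t - S' t| ≤ M * (t-a)^n / (Nat.factorial n : ℝ) := by
      intro t ht
      have := IH (fun k => E (k+1)) a t M ht.1 hM
        (fun k hk z hz => (hder (k+1) (by omega) z ⟨hz.1, hz.2.trans ht.2⟩).mono
          (Set.Icc_subset_Icc le_rfl ht.2))
        (fun z hz => hbd z ⟨hz.1, hz.2.trans ht.2⟩)
      simpa [hS'] using this
    -- apply the fencing theorem
    have key : ∀ t ∈ Set.Icc a b, ‖G t‖ ≤ M * (t-a)^(n+1) / (Nat.factorial (n+1) : ℝ) := by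
      have hBder : ∀ t : ℝ, HasDerivAt (fun t => M * (t-a)^(n+1) / (Nat.factorial (n+1) : ℝ))
          (M * (t-a)^n / (Nat.factorial n : ℝ)) t := by
        intro t
        have h1 : HasDerivAt (fun t : ℝ => (t-a)^(n+1)) (((n:ℝ)+1) * (t-a)^n) t := by
          simpa [Function.comp_def] using ((hasDerivAt_pow (n+1) (t-a)).comp t ((hasDerivAt_id t).sub_const a))
        have := (h1.const_mul M).div_const (Nat.factorial (n+1) : ℝ)
        convert this using 1
        · exact rfl
        · exact rfl
        have hfac : (Nat.factorial (n+1) : ℝ) = ((n:ℝ)+1) * (Nat.factorial n : ℝ) := by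
          push_cast [Nat.factorial_succ]; ring
        have hk1 : ((n:ℝ)+1) ≠ 0 := by positivity
        have hfk : (Nat.factorial n : ℝ) ≠ 0 := Nat.cast_ne_zero.2 (Nat.factorial_ne_zero n)
        rw [hfac]; field_simp
      have hGcont : ContinuousOn G (Set.Icc a b) :=
        fun t ht => (hGder t ht).continuousWithinAt
      have hGa : ‖G a‖ ≤ M * (a-a)^(n+1) / (Nat.factorial (n+1) : ℝ) := by
        have : G a = 0 := by
          rw [hG]
          simp only [sub_self]
          rw [Finset.sum_eq_single 0]
          · simp
          · intro k _ hk
            rcases Nat.exists_eq_succ_of_ne_zero hk with ⟨j, rfl⟩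
            simp [pow_succ]
          · simp
        simp [this]
      intro t ht
      refine image_norm_le_of_norm_deriv_right_le_deriv_boundary (f' := fun z => E 1 z - S' z) hGcont ?_ hGa hBder ?_ ht
      · intro z hz
        exact (hGder z ⟨hz.1, hz.2.le⟩).mono_of_mem_nhdsWithin (Icc_mem_nhdsGE_of_mem hz)
      · intro z hz
        simpa using hG'bd z ⟨hz.1, hz.2.le⟩
    simpa [hG] using key b ⟨hab, le_rfl⟩

set_option maxHeartbeats 2000000 in
/-- Assume moreover `K ≥ 0`.  Fix `x ∈ I`, `h > 0` with `B(x,h)` positive definite.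
Let `β > 0`, `L > 0`, `l = ⌊β⌋ ≤ m` and `q ∈ Σ(β,L,I)` (with derivatives `D k` on `I`,
`D 0 = q`).  Then
`|∫₀^T w(x,h,(X_s−x)/h) K_h(X_s−x) 1_{X_s∈I} (q(X_s) − q(x)) ds|
   ≤ (L h^β / l!)·∫₀^T |w(x,h,(X_s−x)/h)| K_h(X_s−x) 1_{X_s∈I} ds`. -/
theorem stmt_8 (m : ℕ) (T : ℝ) (hT : 0 < T)
    (X : ℝ → ℝ) (hX : Measurable X)
    (c d : ℝ) (hcd : c < d)
    (K : ℝ → ℝ) (hKmeas : Measurable K) (CK : ℝ) (hKbdd : ∀ u, |K u| ≤ CK)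
    (hKsupp : ∀ u, u ∉ Set.Icc (-1 : ℝ) 1 → K u = 0)
    (hKnonneg : ∀ u, 0 ≤ K u)
    (U : ℝ → Fin (m + 1) → ℝ)
    (hU : ∀ z i, U z i = z ^ (i : ℕ) / (Nat.factorial i : ℝ))
    (Kh : ℝ → ℝ → ℝ) (hKh : ∀ h u, Kh h u = h⁻¹ * K (u / h))
    (B : ℝ → ℝ → Matrix (Fin (m + 1)) (Fin (m + 1)) ℝ)
    (hB : ∀ x h, B x h = Matrix.of fun i j =>
      ∫ s in (0 : ℝ)..T, U ((X s - x) / h) i * U ((X s - x) / h) j * Kh h (X s - x) *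
        Set.indicator (Set.Icc c d) (fun _ => (1 : ℝ)) (X s))
    (w : ℝ → ℝ → ℝ → ℝ)
    (hw : ∀ x h z, w x h z = dotProduct (U 0) ((B x h)⁻¹.mulVec (U z)))
    (x : ℝ) (hx : x ∈ Set.Icc c d) (h : ℝ) (hh : 0 < h)
    (hBpd : (B x h).PosDef)
    (β : ℝ) (hβ : 0 < β) (L : ℝ) (hL : 0 < L)
    (l : ℕ) (hl : l = ⌊β⌋₊) (hlm : l ≤ m)
    (q : ℝ → ℝ) (D : ℕ → ℝ → ℝ) (hD0 : D 0 = q)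
    (hderiv : ∀ k < l, ∀ y ∈ Set.Icc c d,
      HasDerivWithinAt (D k) (D (k + 1) y) (Set.Icc c d) y)
    (hHolder : ∀ y ∈ Set.Icc c d, ∀ y' ∈ Set.Icc c d,
      |D l y - D l y'| ≤ L * |y - y'| ^ (β - (l : ℝ))) :
    |∫ s in (0 : ℝ)..T, w x h ((X s - x) / h) * Kh h (X s - x) *
        Set.indicator (Set.Icc c d) (fun _ => (1 : ℝ)) (X s) * (q (X s) - q x)| ≤
      L * h ^ β / (Nat.factorial l : ℝ) *
        ∫ s in (0 : ℝ)..T, |w x h ((X s - x) / h)| * Kh h (X s - x) *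
          Set.indicator (Set.Icc c d) (fun _ => (1 : ℝ)) (X s) := by
  -- basic abbreviations
  set z : ℝ → ℝ := fun s => (X s - x) / h with hz
  set ind : ℝ → ℝ := Set.indicator (Set.Icc c d) (fun _ => (1 : ℝ)) with hind
  set κ : ℝ → ℝ := fun s => Kh h (X s - x) * ind (X s) with hκ
  have hCK0 : 0 ≤ CK := (abs_nonneg _).trans (hKbdd 0)
  have hh' : h ≠ 0 := hh.ne'
  have hzmeas : Measurable z := (hX.sub_const x).div_const h
  have hKhz : ∀ s, Kh h (X s - x) = h⁻¹ * K (z s) := fun s => hKh h (X s - x)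
  have hindmeas : Measurable ind := measurable_const.indicator measurableSet_Icc
  have hind01 : ∀ y, ind y = 0 ∨ ind y = 1 := by
    intro y
    by_cases hy : y ∈ Set.Icc c d
    · right; simp [hind, Set.indicator_of_mem hy]
    · left; simp [hind, Set.indicator_of_notMem hy]
  have hindnn : ∀ y, 0 ≤ ind y := fun y => by rcases hind01 y with h'|h' <;> simp [h']
  have hindle : ∀ y, ind y ≤ 1 := fun y => by rcases hind01 y with h'|h' <;> simp [h']
  have hκmeas : Measurable κ := by
    have : κ = fun s => (h⁻¹ * K (z s)) * ind (X s) := by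
      funext s; rw [hκ]; simp only; rw [hKhz]
    rw [this]
    exact ((hKmeas.comp hzmeas).const_mul _).mul (hindmeas.comp hX)
  have hκnn : ∀ s, 0 ≤ κ s := by
    intro s
    rw [hκ]; simp only
    rw [hKhz]
    exact mul_nonneg (mul_nonneg (inv_nonneg.2 hh.le) (hKnonneg _)) (hindnn _)
  have hκbd : ∀ s, κ s ≤ h⁻¹ * CK := by
    intro s
    rw [hκ]; simp only
    rw [hKhz]
    calc h⁻¹ * K (z s) * ind (X s) ≤ h⁻¹ * K (z s) * 1 :=
          mul_le_mul_of_nonneg_left (hindle _)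
            (mul_nonneg (inv_nonneg.2 hh.le) (hKnonneg _))
      _ = h⁻¹ * K (z s) := mul_one _
      _ ≤ h⁻¹ * CK := mul_le_mul_of_nonneg_left ((le_abs_self _).trans (hKbdd _))
            (inv_nonneg.2 hh.le)
  have hκ0 : ∀ s, κ s ≠ 0 → |z s| ≤ 1 ∧ X s ∈ Set.Icc c d := by
    intro s hs
    constructor
    · by_contra hgt
      apply hs
      rw [hκ]; simp only
      rw [hKhz, hKsupp (z s) (by rw [Set.mem_Icc]; rw [abs_le] at hgt; tauto)]
      ring
    · by_contra hnot
      apply hs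
      rw [hκ]; simp only [hind]
      rw [Set.indicator_of_notMem hnot]
      ring
  have hUb : ∀ (t : ℝ) (k : Fin (m+1)), |t| ≤ 1 → |U t k| ≤ 1 := by
    intro t k ht
    rw [hU]
    rw [abs_div, abs_pow, Nat.abs_cast]
    rw [div_le_one (by positivity)]
    calc |t| ^ (k:ℕ) ≤ 1 := pow_le_one₀ (abs_nonneg t) ht
      _ ≤ (Nat.factorial k : ℝ) := Nat.one_le_cast.2 (Nat.factorial_pos _)
  set Binv : Matrix (Fin (m+1)) (Fin (m+1)) ℝ := (B x h)⁻¹ with hBinv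
  have hWeq : ∀ t, w x h t = ∑ i, ∑ k, U 0 i * Binv i k * U t k := by
    intro t
    rw [hw]
    simp only [dotProduct, Matrix.mulVec, dotProduct, Finset.mul_sum, hBinv]
    exact Finset.sum_congr rfl fun i _ => Finset.sum_congr rfl fun k _ => by ring
  have hUkmeas : ∀ k : Fin (m+1), Measurable (fun t : ℝ => U t k) := by
    intro k
    have : (fun t : ℝ => U t k) = fun t => t ^ (k:ℕ) / (Nat.factorial k : ℝ) := by
      funext t; exact hU t k
    rw [this]
    exact (measurable_id.pow_const _).div_const _
  have hwmeas : Measurable (fun t => w x h t) := by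
    have : (fun t => w x h t) = fun t => ∑ i, ∑ k, U 0 i * Binv i k * U t k := by
      funext t; exact hWeq t
    rw [this]
    exact Finset.measurable_sum _ fun i _ =>
      Finset.measurable_sum _ fun k _ => (hUkmeas k).const_mul _
  set Cw : ℝ := ∑ i, ∑ k, |U 0 i| * |Binv i k| with hCw
  have hCw0 : 0 ≤ Cw :=
    Finset.sum_nonneg fun i _ => Finset.sum_nonneg fun k _ =>
      mul_nonneg (abs_nonneg _) (abs_nonneg _)
  have hwb : ∀ t, |t| ≤ 1 → |w x h t| ≤ Cw := by
    intro t ht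
    rw [hWeq]
    refine (Finset.abs_sum_le_sum_abs _ _).trans ?_
    refine Finset.sum_le_sum fun i _ => ?_
    refine (Finset.abs_sum_le_sum_abs _ _).trans ?_
    refine Finset.sum_le_sum fun k _ => ?_
    rw [abs_mul, abs_mul]
    calc |U 0 i| * |Binv i k| * |U t k| ≤ |U 0 i| * |Binv i k| * 1 :=
          mul_le_mul_of_nonneg_left (hUb t k ht) (mul_nonneg (abs_nonneg _) (abs_nonneg _))
      _ = |U 0 i| * |Binv i k| := mul_one _
  -- integrability helper
  have hIntH : ∀ (f : ℝ → ℝ) (C : ℝ), Measurable f → (∀ s, |f s| ≤ C) →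
      IntervalIntegrable f volume 0 T := by
    intro f C hf hb
    rw [intervalIntegrable_iff]
    refine MeasureTheory.Integrable.mono' (g := fun _ => C)
      (MeasureTheory.integrableOn_const ?_)
      hf.aestronglyMeasurable.restrict (Filter.Eventually.of_forall fun s => by
        simpa [Real.norm_eq_abs] using hb s)
    exact measure_Ioc_lt_top.ne
  -- bound and measurability of the basic quadratic integrands
  have hgmeas : ∀ k j : Fin (m+1), Measurable (fun s => U (z s) k * U (z s) j * κ s) :=
    fun k j => (((hUkmeas k).comp hzmeas).mul ((hUkmeas j).comp hzmeas)).mul hκmeas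
  have hgbd : ∀ (k j : Fin (m+1)) (s : ℝ), |U (z s) k * U (z s) j * κ s| ≤ h⁻¹ * CK := by
    intro k j s
    by_cases hs : κ s = 0
    · simp [hs]
      positivity
    · obtain ⟨hz1, -⟩ := hκ0 s hs
      rw [abs_mul, abs_mul]
      calc |U (z s) k| * |U (z s) j| * |κ s| ≤ 1 * 1 * (h⁻¹ * CK) := by
            refine mul_le_mul (mul_le_mul (hUb _ _ hz1) (hUb _ _ hz1)
              (abs_nonneg _) zero_le_one) ?_ (abs_nonneg _) (by norm_num)
            rw [abs_of_nonneg (hκnn s)]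
            exact hκbd s
        _ = h⁻¹ * CK := by ring
  have hgint : ∀ k j : Fin (m+1),
      IntervalIntegrable (fun s => U (z s) k * U (z s) j * κ s) volume 0 T :=
    fun k j => hIntH _ _ (hgmeas k j) (hgbd k j)
  have hgB : ∀ k j : Fin (m+1),
      (∫ s in (0:ℝ)..T, U (z s) k * U (z s) j * κ s) = B x h k j := by
    intro k j
    rw [hB x h]
    show _ = ∫ s in (0:ℝ)..T, U ((X s - x) / h) k * U ((X s - x) / h) j * Kh h (X s - x) * ind (X s)
    refine intervalIntegral.integral_congr fun s _ => ?_
    rw [hκ]; simp only; ring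
  -- the reproducing property
  have hA : ∀ j : Fin (m+1),
      (∫ s in (0:ℝ)..T, w x h (z s) * κ s * U (z s) j) = U 0 j := by
    intro j
    have hptw : ∀ s, w x h (z s) * κ s * U (z s) j
        = ∑ i, ∑ k, U 0 i * Binv i k * (U (z s) k * U (z s) j * κ s) := by
      intro s
      rw [hWeq]
      rw [Finset.sum_mul, Finset.sum_mul]
      refine Finset.sum_congr rfl fun i _ => ?_
      rw [Finset.sum_mul, Finset.sum_mul]
      exact Finset.sum_congr rfl fun k _ => by ring
    have hii : ∀ i : Fin (m+1), IntervalIntegrable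
        (fun s => ∑ k, U 0 i * Binv i k * (U (z s) k * U (z s) j * κ s)) volume 0 T := by
      intro i
      have := IntervalIntegrable.sum Finset.univ
        (f := fun (k : Fin (m+1)) (s : ℝ) => U 0 i * Binv i k * (U (z s) k * U (z s) j * κ s))
        (fun k _ => (hgint k j).const_mul (U 0 i * Binv i k))
      simpa [Finset.sum_fn] using this
    have e1 := intervalIntegral.integral_finset_sum (μ := volume) (a := (0:ℝ)) (b := T)
      (s := Finset.univ)
      (f := fun (i : Fin (m+1)) (s : ℝ) => ∑ k, U 0 i * Binv i k * (U (z s) k * U (z s) j * κ s))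
      (fun i _ => hii i)
    rw [intervalIntegral.integral_congr fun s _ => hptw s, e1]
    have : ∀ i : Fin (m+1), (∫ s in (0:ℝ)..T, ∑ k, U 0 i * Binv i k * (U (z s) k * U (z s) j * κ s))
        = ∑ k, U 0 i * Binv i k * B x h k j := by
      intro i
      have e2 := intervalIntegral.integral_finset_sum (μ := volume) (a := (0:ℝ)) (b := T)
        (s := Finset.univ)
        (f := fun (k : Fin (m+1)) (s : ℝ) => U 0 i * Binv i k * (U (z s) k * U (z s) j * κ s))
        (fun k _ => (hgint k j).const_mul (U 0 i * Binv i k))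
      rw [e2]
      refine Finset.sum_congr rfl fun k _ => ?_
      rw [intervalIntegral.integral_const_mul, hgB k j]
    rw [Finset.sum_congr rfl fun i _ => this i]
    have hinvmul : Binv * B x h = 1 :=
      Matrix.nonsing_inv_mul _ (isUnit_iff_ne_zero.2 hBpd.det_pos.ne')
    calc (∑ i, ∑ k, U 0 i * Binv i k * B x h k j)
        = ∑ i, U 0 i * ((Binv * B x h) i j) := by
          refine Finset.sum_congr rfl fun i _ => ?_
          rw [Matrix.mul_apply, Finset.mul_sum]
          exact Finset.sum_congr rfl fun k _ => by ring
      _ = ∑ i, U 0 i * (1 : Matrix (Fin (m+1)) (Fin (m+1)) ℝ) i j := by rw [hinvmul]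
      _ = U 0 j := by
          simp [Matrix.one_apply]
  -- Taylor polynomial
  set P : ℝ → ℝ := fun y => ∑ k ∈ Finset.range (l+1), D k x * (y - x)^k / (Nat.factorial k : ℝ)
    with hPdef
  have hPcont : Continuous P := by
    rw [hPdef]
    exact continuous_finset_sum _ fun k _ =>
      ((continuous_const.mul ((continuous_id.sub continuous_const).pow k))).div_const _
  have hβl : (l:ℝ) ≤ β := by rw [hl]; exact_mod_cast Nat.floor_le hβ.le
  have hMval : 0 ≤ L * h ^ (β - (l:ℝ)) := mul_nonneg hL.le (Real.rpow_nonneg hh.le _)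
  -- pointwise Taylor estimate
  have hTay : ∀ y ∈ Set.Icc c d, |y - x| ≤ h →
      |q y - P y| ≤ L * h ^ β / (Nat.factorial l : ℝ) := by
    intro y hy hyx
    set M : ℝ := L * h ^ (β - (l:ℝ)) with hMdef
    have hMb : ∀ t : ℝ, |t| ≤ h → L * |t| ^ (β - (l:ℝ)) ≤ M :=
      fun t ht => mul_le_mul_of_nonneg_left
        (Real.rpow_le_rpow (abs_nonneg t) ht (by linarith)) hL.le
    have hfin : ∀ u : ℝ, 0 ≤ u → u ≤ h →
        M * u ^ l / (Nat.factorial l : ℝ) ≤ L * h ^ β / (Nat.factorial l : ℝ) := by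
      intro u hu huh
      have h1 : M * u ^ l ≤ M * h ^ l :=
        mul_le_mul_of_nonneg_left (pow_le_pow_left₀ hu huh l) hMval
      have h2 : M * h ^ l = L * h ^ β := by
        rw [hMdef, mul_assoc, ← Real.rpow_natCast h l, ← Real.rpow_add hh]
        ring_nf
      rw [← h2]
      exact div_le_div_of_nonneg_right h1 (by positivity)
    rcases le_total x y with hxy | hxy
    · have hyxh : y - x ≤ h := by
        rw [abs_of_nonneg (by linarith)] at hyx; exact hyx
      have key := taylor_aux l D x y M hxy hMval
        (fun k hk t ht => (hderiv k hk t ⟨hx.1.trans ht.1, ht.2.trans hy.2⟩).mono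
          (Set.Icc_subset_Icc hx.1 hy.2))
        (fun t ht => by
          refine (hHolder t ⟨hx.1.trans ht.1, ht.2.trans hy.2⟩ x hx).trans (hMb (t - x) ?_)
          rw [abs_of_nonneg (by linarith [ht.1])]
          linarith [ht.2])
      have : q y - P y = D 0 y - ∑ k ∈ Finset.range (l+1), D k x * (y-x)^k / (Nat.factorial k : ℝ) := by
        rw [hD0, hPdef]
      rw [this]
      exact key.trans (hfin (y - x) (by linarith) hyxh)
    · have hyxh : x - y ≤ h := by
        rw [abs_of_nonpos (by linarith)] at hyx; linarith
      have hmaps : ∀ t ∈ Set.Icc y x, x + y - t ∈ Set.Icc y x := by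
        intro t ht
        exact ⟨by linarith [ht.2], by linarith [ht.1]⟩
      have key := taylor_aux l (fun k t => (-1:ℝ)^k * D k (x + y - t)) y x M hxy hMval
        (fun k hk t ht => by
          have hmem := hmaps t ht
          have hmem' : x + y - t ∈ Set.Icc c d := ⟨hy.1.trans hmem.1, hmem.2.trans hx.2⟩
          have hinner : HasDerivWithinAt (fun t : ℝ => x + y - t) (-1 : ℝ) (Set.Icc y x) t :=
            ((hasDerivAt_id t).const_sub (x + y)).hasDerivWithinAt
          have hcomp : HasDerivWithinAt (fun t => D k (x + y - t))
              (D (k+1) (x + y - t) * (-1)) (Set.Icc y x) t :=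
            HasDerivWithinAt.comp t
              ((hderiv k hk (x + y - t) hmem').mono (Set.Icc_subset_Icc (hy.1) (hx.2)))
              hinner hmaps
          have := hcomp.const_mul ((-1:ℝ)^k)
          simpa [pow_succ, mul_comm, mul_assoc, mul_left_comm] using this)
        (fun t ht => by
          have hmem := hmaps t ht
          have hmem' : x + y - t ∈ Set.Icc c d := ⟨hy.1.trans hmem.1, hmem.2.trans hx.2⟩
          have e : (-1:ℝ)^l * D l (x + y - t) - (-1:ℝ)^l * D l (x + y - y) =
              (-1:ℝ)^l * (D l (x + y - t) - D l x) := by ring_nf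
          rw [e, abs_mul, abs_pow, abs_neg, abs_one, one_pow, one_mul]
          refine (hHolder (x + y - t) hmem' x hx).trans (hMb _ ?_)
          have : x + y - t - x = y - t := by ring
          rw [this, abs_of_nonpos (by linarith [ht.1])]
          linarith [ht.2])
      have e0 : (-1:ℝ)^(0:ℕ) * D 0 (x + y - x) = q y := by
        rw [hD0]; simp
      have esum : ∑ k ∈ Finset.range (l+1), ((-1:ℝ)^k * D k (x + y - y)) * (x-y)^k / (Nat.factorial k : ℝ)
          = P y := by
        rw [hPdef]
        refine Finset.sum_congr rfl fun k _ => ?_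
        have : ((-1:ℝ)^k * D k (x + y - y)) * (x-y)^k = D k x * (y-x)^k := by
          have h1 : x + y - y = x := by ring
          rw [h1, mul_comm ((-1:ℝ)^k) (D k x), mul_assoc, ← mul_pow]
          ring_nf
        rw [this]
      have key2 : |q y - P y| ≤ M * (x-y)^l / (Nat.factorial l : ℝ) := by
        rw [← e0, ← esum]
        exact key
      exact key2.trans (hfin (x - y) (by linarith) hyxh)
  -- continuity of q on the interval
  have hqcont : ContinuousOn q (Set.Icc c d) := by
    rcases Nat.eq_zero_or_pos l with hl0 | hlpos
    · intro y hy
      have hq0 : ∀ y' ∈ Set.Icc c d, |q y' - q y| ≤ L * |y' - y| ^ (β - (l:ℝ)) := by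
        intro y' hy'
        have := hHolder y' hy' y hy
        rw [hl0, hD0] at this
        convert this using 3 <;> rw [hl0]
      have hb0 : 0 < β - (l:ℝ) := by rw [hl0]; simpa using hβ
      have h1 : Filter.Tendsto (fun y' => L * |y' - y| ^ (β - (l:ℝ)))
          (nhdsWithin y (Set.Icc c d)) (nhds 0) := by
        have t1 : Filter.Tendsto (fun y' : ℝ => |y' - y|)
            (nhdsWithin y (Set.Icc c d)) (nhds 0) := by
          have hcont : Continuous fun y' : ℝ => |y' - y| :=
            (continuous_id.sub continuous_const).abs
          have := (hcont.continuousWithinAt (x := y) (s := Set.Icc c d))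
          simpa [ContinuousWithinAt] using this
        have t2 : Filter.Tendsto (fun u : ℝ => u ^ (β - (l:ℝ))) (nhds 0) (nhds 0) := by
          have := (Real.continuousAt_rpow_const 0 (β - (l:ℝ)) (Or.inr hb0.le)).tendsto
          rwa [Real.zero_rpow hb0.ne'] at this
        have := (t2.comp t1).const_mul L
        simpa using this
      rw [ContinuousWithinAt, tendsto_iff_dist_tendsto_zero]
      refine squeeze_zero' (Filter.Eventually.of_forall fun _ => dist_nonneg) ?_ h1
      filter_upwards [self_mem_nhdsWithin] with y' hy'
      rw [Real.dist_eq]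
      exact hq0 y' hy'
    · intro y hy
      have := (hderiv 0 hlpos y hy).continuousWithinAt
      rwa [hD0] at this
  have hqPmeas : Measurable (Set.indicator (Set.Icc c d) (fun y => q y - P y)) :=
    measurable_indicator_of_continuousOn measurableSet_Icc
      (hqcont.sub hPcont.continuousOn)
  -- the two pieces
  set f1 : ℝ → ℝ := fun s => w x h (z s) * Kh h (X s - x) *
      Set.indicator (Set.Icc c d) (fun y => q y - P y) (X s) with hf1def
  set N : ℕ → Fin (m+1) := fun k => ⟨min (k+1) m, by omega⟩ with hNdef
  have hNval : ∀ k < l, ((N k : Fin (m+1)) : ℕ) = k + 1 := by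
    intro k hk
    simp only [hNdef]
    exact min_eq_left (by omega)
  set f2 : ℝ → ℝ := fun s => ∑ k ∈ Finset.range l,
      D (k+1) x * h^(k+1) * (w x h (z s) * κ s * U (z s) (N k)) with hf2def
  have hPsum : ∀ y : ℝ, P y = q x + ∑ k ∈ Finset.range l,
      D (k+1) x * (y - x)^(k+1) / (Nat.factorial (k+1) : ℝ) := by
    intro y
    simp only [hPdef]
    rw [Finset.sum_range_succ'
      (fun k => D k x * (y - x)^k / (Nat.factorial k : ℝ)) l]
    rw [hD0]
    simp [add_comm]
  -- splitting identity
  have hsplit : ∀ s, w x h (z s) * Kh h (X s - x) * ind (X s) * (q (X s) - q x)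
      = f1 s + f2 s := by
    intro s
    by_cases hmem : X s ∈ Set.Icc c d
    · have hind1 : ind (X s) = 1 := by rw [hind]; exact Set.indicator_of_mem hmem _
      have hκs : κ s = Kh h (X s - x) := by rw [hκ]; simp only; rw [hind1, mul_one]
      have hf1s : f1 s = w x h (z s) * Kh h (X s - x) * (q (X s) - P (X s)) := by
        rw [hf1def]; simp only
        rw [Set.indicator_of_mem hmem]
      have hf2s : f2 s = w x h (z s) * Kh h (X s - x) *
          (∑ k ∈ Finset.range l, D (k+1) x * (X s - x)^(k+1) / (Nat.factorial (k+1) : ℝ)) := by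
        rw [hf2def]; simp only
        rw [Finset.mul_sum]
        refine Finset.sum_congr rfl fun k hk => ?_
        have hkl : k < l := Finset.mem_range.1 hk
        rw [hκs, hU, hNval k hkl]
        have hzz : h * z s = X s - x := by rw [hz]; field_simp
        calc D (k+1) x * h^(k+1) *
              (w x h (z s) * Kh h (X s - x) * ((z s)^(k+1) / (Nat.factorial (k+1) : ℝ)))
            = w x h (z s) * Kh h (X s - x) *
              (D (k+1) x * (h * z s)^(k+1) / (Nat.factorial (k+1) : ℝ)) := by
              rw [mul_pow]; ring
          _ = _ := by rw [hzz]
      have hqq : q (X s) - q x = (q (X s) - P (X s)) +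
          ∑ k ∈ Finset.range l, D (k+1) x * (X s - x)^(k+1) / (Nat.factorial (k+1) : ℝ) := by
        rw [hPsum (X s)]; ring
      rw [hind1, mul_one, hf1s, hf2s, hqq]
      ring
    · have hind0 : ind (X s) = 0 := by rw [hind]; exact Set.indicator_of_notMem hmem _
      have hκs : κ s = 0 := by rw [hκ]; simp only; rw [hind0, mul_zero]
      have hf1s : f1 s = 0 := by
        rw [hf1def]; simp only
        rw [Set.indicator_of_notMem hmem, mul_zero]
      have hf2s : f2 s = 0 := by
        rw [hf2def]; simp only
        refine Finset.sum_eq_zero fun k _ => ?_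
        rw [hκs]; ring
      rw [hind0, hf1s, hf2s]
      ring
  -- integrability of the pieces
  have hwκbd : ∀ s, |w x h (z s)| * κ s ≤ Cw * (h⁻¹ * CK) := by
    intro s
    by_cases hs : κ s = 0
    · rw [hs, mul_zero]
      positivity
    · obtain ⟨hz1, -⟩ := hκ0 s hs
      exact mul_le_mul (hwb _ hz1) (hκbd s) (hκnn s) hCw0
  have hwκUmeas : ∀ j : Fin (m+1),
      Measurable (fun s => w x h (z s) * κ s * U (z s) j) :=
    fun j => ((hwmeas.comp hzmeas).mul hκmeas).mul ((hUkmeas j).comp hzmeas)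
  have hwκUbd : ∀ (j : Fin (m+1)) (s : ℝ),
      |w x h (z s) * κ s * U (z s) j| ≤ Cw * (h⁻¹ * CK) := by
    intro j s
    by_cases hs : κ s = 0
    · rw [hs]
      simp only [mul_zero, zero_mul, abs_zero]
      positivity
    · obtain ⟨hz1, -⟩ := hκ0 s hs
      rw [abs_mul, abs_mul, abs_of_nonneg (hκnn s)]
      calc |w x h (z s)| * κ s * |U (z s) j| ≤ |w x h (z s)| * κ s * 1 :=
            mul_le_mul_of_nonneg_left (hUb _ _ hz1)
              (mul_nonneg (abs_nonneg _) (hκnn s))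
        _ = |w x h (z s)| * κ s := mul_one _
        _ ≤ Cw * (h⁻¹ * CK) := hwκbd s
  have hwκUint : ∀ j : Fin (m+1),
      IntervalIntegrable (fun s => w x h (z s) * κ s * U (z s) j) volume 0 T :=
    fun j => hIntH _ _ (hwκUmeas j) (hwκUbd j)
  have hf1meas : Measurable f1 := by
    have : f1 = fun s => w x h (z s) * (h⁻¹ * K (z s)) *
        Set.indicator (Set.Icc c d) (fun y => q y - P y) (X s) := by
      funext s
      rw [hf1def]; simp only
      rw [hKhz]
    rw [this]
    exact ((hwmeas.comp hzmeas).mul ((hKmeas.comp hzmeas).const_mul _)).mul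
      (hqPmeas.comp hX)
  have hC0 : 0 ≤ L * h ^ β / (Nat.factorial l : ℝ) := by positivity
  -- pointwise domination of f1
  have hf1ptw : ∀ s, |f1 s| ≤ (L * h ^ β / (Nat.factorial l : ℝ)) * (|w x h (z s)| * κ s) := by
    intro s
    by_cases hmem : X s ∈ Set.Icc c d
    · have hind1 : ind (X s) = 1 := by rw [hind]; exact Set.indicator_of_mem hmem _
      have hκs : κ s = Kh h (X s - x) := by rw [hκ]; simp only; rw [hind1, mul_one]
      have hKh0 : 0 ≤ Kh h (X s - x) := by
        rw [hKhz]
        exact mul_nonneg (inv_nonneg.2 hh.le) (hKnonneg _)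
      have hf1s : f1 s = w x h (z s) * Kh h (X s - x) * (q (X s) - P (X s)) := by
        rw [hf1def]; simp only
        rw [Set.indicator_of_mem hmem]
      by_cases hz1 : |z s| ≤ 1
      · have hXs : |X s - x| ≤ h := by
          have : |z s| = |X s - x| / h := by
            rw [hz]; simp only
            rw [abs_div, abs_of_pos hh]
          rw [this, div_le_one hh] at hz1
          exact hz1
        have htay := hTay (X s) hmem hXs
        rw [hf1s, hκs]
        rw [abs_mul, abs_mul, abs_of_nonneg hKh0]
        calc |w x h (z s)| * Kh h (X s - x) * |q (X s) - P (X s)|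
            ≤ |w x h (z s)| * Kh h (X s - x) * (L * h ^ β / (Nat.factorial l : ℝ)) :=
              mul_le_mul_of_nonneg_left htay (mul_nonneg (abs_nonneg _) hKh0)
          _ = (L * h ^ β / (Nat.factorial l : ℝ)) * (|w x h (z s)| * Kh h (X s - x)) := by
              ring
      · have hK0 : K (z s) = 0 := by
          refine hKsupp _ ?_
          rw [Set.mem_Icc]
          rw [abs_le] at hz1
          tauto
        have hKh0' : Kh h (X s - x) = 0 := by rw [hKhz, hK0, mul_zero]
        rw [hf1s, hκs, hKh0']
        simp
    · have hκs : κ s = 0 := by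
        rw [hκ]; simp only [hind]
        rw [Set.indicator_of_notMem hmem, mul_zero]
      have hf1s : f1 s = 0 := by
        rw [hf1def]; simp only
        rw [Set.indicator_of_notMem hmem, mul_zero]
      rw [hf1s, hκs]
      simp
  have hf1bd : ∀ s, |f1 s| ≤ (L * h ^ β / (Nat.factorial l : ℝ)) * (Cw * (h⁻¹ * CK)) := by
    intro s
    exact (hf1ptw s).trans (mul_le_mul_of_nonneg_left (hwκbd s) hC0)
  have hf1int : IntervalIntegrable f1 volume 0 T := hIntH _ _ hf1meas hf1bd
  have hf2int : IntervalIntegrable f2 volume 0 T := by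
    have : f2 = fun s => ∑ k ∈ Finset.range l,
        (fun k s => D (k+1) x * h^(k+1) * (w x h (z s) * κ s * U (z s) (N k))) k s := by
      funext s; rw [hf2def]
    rw [this]
    have := IntervalIntegrable.sum (μ := volume) (a := (0:ℝ)) (b := T) (Finset.range l)
      (f := fun k s => D (k+1) x * h^(k+1) * (w x h (z s) * κ s * U (z s) (N k)))
      (fun k _ => (hwκUint (N k)).const_mul (D (k+1) x * h^(k+1)))
    simpa [Finset.sum_fn] using this
  have hf2zero : (∫ s in (0:ℝ)..T, f2 s) = 0 := by
    have e3 := intervalIntegral.integral_finset_sum (μ := volume) (a := (0:ℝ)) (b := T)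
      (s := Finset.range l)
      (f := fun k s => D (k+1) x * h^(k+1) * (w x h (z s) * κ s * U (z s) (N k)))
      (fun k _ => (hwκUint (N k)).const_mul (D (k+1) x * h^(k+1)))
    calc (∫ s in (0:ℝ)..T, f2 s)
        = ∫ s in (0:ℝ)..T, ∑ k ∈ Finset.range l,
            D (k+1) x * h^(k+1) * (w x h (z s) * κ s * U (z s) (N k)) := by
          refine intervalIntegral.integral_congr fun s _ => ?_
          rw [hf2def]
      _ = ∑ k ∈ Finset.range l, ∫ s in (0:ℝ)..T,
            D (k+1) x * h^(k+1) * (w x h (z s) * κ s * U (z s) (N k)) := e3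
      _ = 0 := by
          refine Finset.sum_eq_zero fun k hk => ?_
          rw [intervalIntegral.integral_const_mul, hA (N k)]
          rw [hU, hNval k (Finset.mem_range.1 hk)]
          simp
  -- the RHS integrand
  have hgfmeas : Measurable (fun s => |w x h (z s)| * κ s) :=
    (hwmeas.comp hzmeas).abs.mul hκmeas
  have hgfbd : ∀ s, |(|w x h (z s)| * κ s)| ≤ Cw * (h⁻¹ * CK) := by
    intro s
    rw [abs_of_nonneg (mul_nonneg (abs_nonneg _) (hκnn s))]
    exact hwκbd s
  have hgfint : IntervalIntegrable (fun s => |w x h (z s)| * κ s) volume 0 T :=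
    hIntH _ _ hgfmeas hgfbd
  -- assembling everything
  have hLHS : (∫ s in (0:ℝ)..T, w x h (z s) * Kh h (X s - x) * ind (X s) * (q (X s) - q x))
      = ∫ s in (0:ℝ)..T, f1 s := by
    calc (∫ s in (0:ℝ)..T, w x h (z s) * Kh h (X s - x) * ind (X s) * (q (X s) - q x))
        = ∫ s in (0:ℝ)..T, (f1 s + f2 s) :=
          intervalIntegral.integral_congr fun s _ => hsplit s
      _ = (∫ s in (0:ℝ)..T, f1 s) + ∫ s in (0:ℝ)..T, f2 s :=
          intervalIntegral.integral_add hf1int hf2int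
      _ = ∫ s in (0:ℝ)..T, f1 s := by rw [hf2zero, add_zero]
  rw [hLHS]
  calc |∫ s in (0:ℝ)..T, f1 s| ≤ ∫ s in (0:ℝ)..T, |f1 s| := by
        simpa [Real.norm_eq_abs] using
          intervalIntegral.norm_integral_le_integral_norm (f := f1) (μ := volume) hT.le
    _ ≤ ∫ s in (0:ℝ)..T, (L * h ^ β / (Nat.factorial l : ℝ)) * (|w x h (z s)| * κ s) :=
        intervalIntegral.integral_mono_on hT.le hf1int.abs
          (hgfint.const_mul _) (fun s _ => hf1ptw s)
    _ = (L * h ^ β / (Nat.factorial l : ℝ)) * ∫ s in (0:ℝ)..T, |w x h (z s)| * κ s :=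
        intervalIntegral.integral_const_mul _ _
    _ = L * h ^ β / (Nat.factorial l : ℝ) *
        ∫ s in (0:ℝ)..T, |w x h (z s)| * Kh h (X s - x) * ind (X s) := by
        congr 1
        refine intervalIntegral.integral_congr fun s _ => ?_
        rw [hκ]; simp only; ring
end

section
/- Let H be a real inner product space, 𝓗 a finite nonempty set, (f_h)_{h∈𝓗} a family of vectors in H, g ∈ H, pen : 𝓗 → ℝ a function, h_min ∈ 𝓗, and let ĥ ∈ 𝓗 be a minimizer over 𝓗 of h ↦ ‖f_h − f_{h_min}‖² + pen(h). Then for every h ∈ 𝓗, ‖f_ĥ − g‖² ≤ ‖f_h − g‖² + ( pen(h) − 2⟨f_h − g, f_{h_min} − g⟩ ) − ( pen(ĥ) − 2⟨f_ĥ − g, f_{h_min} − g⟩ ). -/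
/-- Let `H` be a real inner product space, `𝓗` a finite nonempty (index) set,
`(f_h)_{h∈𝓗}` a family in `H`, `g ∈ H`, `pen : 𝓗 → ℝ`, `h_min ∈ 𝓗`, and let `ĥ` minimize
`h ↦ ‖f_h − f_{h_min}‖² + pen h` over `𝓗`.  Then for every `h ∈ 𝓗`,
`‖f_ĥ − g‖² ≤ ‖f_h − g‖² + (pen h − 2⟨f_h − g, f_{h_min} − g⟩) − (pen ĥ − 2⟨f_ĥ − g, f_{h_min} − g⟩)`. -/
theorem stmt_9 {H : Type*} [NormedAddCommGroup H] [InnerProductSpace ℝ H]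
    {𝓗 : Type*} [Fintype 𝓗] [Nonempty 𝓗]
    (f : 𝓗 → H) (g : H) (pen : 𝓗 → ℝ) (hmin : 𝓗) (hhat : 𝓗)
    (hopt : ∀ h : 𝓗, ‖f hhat - f hmin‖ ^ 2 + pen hhat ≤ ‖f h - f hmin‖ ^ 2 + pen h) :
    ∀ h : 𝓗,
      ‖f hhat - g‖ ^ 2 ≤ ‖f h - g‖ ^ 2
        + (pen h - 2 * (inner ℝ (f h - g) (f hmin - g) : ℝ))
        - (pen hhat - 2 * (inner ℝ (f hhat - g) (f hmin - g) : ℝ)) := by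
  intro h
  have key : ∀ a : 𝓗, ‖f a - f hmin‖ ^ 2
      = ‖f a - g‖ ^ 2 - 2 * (inner ℝ (f a - g) (f hmin - g) : ℝ) + ‖f hmin - g‖ ^ 2 := by
    intro a
    have : f a - f hmin = (f a - g) - (f hmin - g) := by abel
    rw [this, norm_sub_sq_real]
  have h1 := hopt h
  rw [key h, key hhat] at h1
  linarith
end

section
/- Let m ≥ 0 be an integer and K : ℝ → ℝ a bounded measurable function with compact support such that the (m+1)×(m+1) matrix M = ∫_ℝ U(u)U(u)^T K(u) du is invertible. Define w(u) = U(0)^T M^{-1} U(u). Then ∫_ℝ w(u) K(u) du = 1, and for every integer k with 1 ≤ k ≤ m, ∫_ℝ w(u) K(u) u^k du = 0. -/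
open MeasureTheory Matrix

lemma aux_int_stmt15 (K : ℝ → ℝ) (hKmeas : Measurable K) (CK : ℝ)
    (hKbdd : ∀ u, |K u| ≤ CK) (hKsupp : HasCompactSupport K)
    (g : ℝ → ℝ) (hg : Continuous g) :
    Integrable (fun u => g u * K u) := by
  obtain ⟨C, hC⟩ := hKsupp.isCompact.exists_bound_of_continuousOn hg.continuousOn
  have hsub : Function.support (fun u => g u * K u) ⊆ tsupport K := by
    intro x hx
    apply subset_tsupport K
    simp only [Function.mem_support] at hx ⊢
    intro h
    apply hx
    rw [h, mul_zero]
  rw [← integrableOn_iff_integrable_of_support_subset hsub]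
  apply Measure.integrableOn_of_bounded (M := C * CK)
  · exact hKsupp.isCompact.measure_lt_top.ne
  · exact ((hg.measurable.mul hKmeas)).aestronglyMeasurable
  · rw [ae_restrict_iff' (isClosed_tsupport K).measurableSet]
    filter_upwards with x hx
    have h1 : |g x| ≤ C := hC x hx
    have h2 : (0:ℝ) ≤ C := le_trans (abs_nonneg _) h1
    calc ‖g x * K x‖ = |g x| * |K x| := abs_mul _ _
      _ ≤ C * CK := mul_le_mul h1 (hKbdd x) (abs_nonneg _) h2

/-- Let `m ≥ 0` and `K : ℝ → ℝ` bounded measurable with compact support such that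
`M = ∫_ℝ U(u)U(u)ᵀ K(u) du` is invertible, and set `w(u) = U(0)ᵀ M⁻¹ U(u)`.  Then
`∫_ℝ w(u) K(u) du = 1` and `∫_ℝ w(u) K(u) u^k du = 0` for every `1 ≤ k ≤ m`. -/
theorem stmt_15 (m : ℕ)
    (U : ℝ → Fin (m + 1) → ℝ)
    (hU : ∀ z i, U z i = z ^ (i : ℕ) / (Nat.factorial i : ℝ))
    (K : ℝ → ℝ) (hKmeas : Measurable K) (CK : ℝ) (hKbdd : ∀ u, |K u| ≤ CK)
    (hKsupp : HasCompactSupport K)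
    (M : Matrix (Fin (m + 1)) (Fin (m + 1)) ℝ)
    (hM : M = Matrix.of fun i j => ∫ u, U u i * U u j * K u)
    (hMinv : IsUnit M.det)
    (w : ℝ → ℝ)
    (hw : ∀ u, w u = dotProduct (U 0) (M⁻¹.mulVec (U u))) :
    (∫ u, w u * K u) = 1 ∧
      ∀ k : ℕ, 1 ≤ k → k ≤ m → (∫ u, w u * K u * u ^ k) = 0 := by
  have hMinvMul : M⁻¹ * M = 1 := nonsing_inv_mul M hMinv
  have hintg : ∀ (k : ℕ) (j : Fin (m + 1)),
      Integrable (fun u => U u j * u ^ k * K u) := by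
    intro k j
    have heq : (fun u : ℝ => U u j * u ^ k * K u)
        = fun u => (u ^ (j : ℕ) / (Nat.factorial j : ℝ) * u ^ k) * K u := by
      funext u; rw [hU]
    rw [heq]
    exact aux_int_stmt15 K hKmeas CK hKbdd hKsupp _
      (((continuous_pow _).div_const _).mul (continuous_pow _))
  have key : ∀ k : ℕ, k ≤ m → (∫ u, w u * K u * u ^ k) = (0:ℝ) ^ k := by
    intro k hk
    set k' : Fin (m + 1) := ⟨k, Nat.lt_succ_of_le hk⟩ with hk'
    have hfac : (Nat.factorial k : ℝ) ≠ 0 := Nat.cast_ne_zero.mpr (Nat.factorial_ne_zero k)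
    have h1 : ∀ u, w u * K u * u ^ k
        = ∑ i, ∑ j, U 0 i * M⁻¹ i j * (U u j * u ^ k * K u) := by
      intro u
      rw [hw u]
      simp only [dotProduct, Matrix.mulVec]
      rw [Finset.sum_mul, Finset.sum_mul]
      apply Finset.sum_congr rfl
      intro i _
      rw [Finset.mul_sum, Finset.sum_mul, Finset.sum_mul]
      apply Finset.sum_congr rfl
      intro j _
      ring
    have hI : ∀ j, (∫ u, U u j * u ^ k * K u) = (Nat.factorial k : ℝ) * M j k' := by
      intro j
      rw [hM]
      simp only [Matrix.of_apply]
      rw [← integral_const_mul]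
      congr 1
      funext u
      rw [hU u k']
      field_simp
      show U u j * u ^ k * K u * (Nat.factorial k : ℝ) = U u j * K u * (Nat.factorial k : ℝ) * u ^ k
      ring
    calc (∫ u, w u * K u * u ^ k)
        = ∫ u, ∑ i, ∑ j, U 0 i * M⁻¹ i j * (U u j * u ^ k * K u) := by
          simp_rw [h1]
      _ = ∑ i, ∑ j, U 0 i * M⁻¹ i j * ∫ u, U u j * u ^ k * K u := by
          rw [integral_finset_sum]
          · apply Finset.sum_congr rfl
            intro i _
            rw [integral_finset_sum]
            · apply Finset.sum_congr rfl
              intro j _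
              exact integral_const_mul _ _
            · intro j _
              exact (hintg k j).const_mul _
          · intro i _
            exact integrable_finset_sum _ (fun j _ => (hintg k j).const_mul _)
      _ = ∑ i, U 0 i * (Nat.factorial k : ℝ) * ∑ j, M⁻¹ i j * M j k' := by
          apply Finset.sum_congr rfl
          intro i _
          rw [Finset.mul_sum]
          apply Finset.sum_congr rfl
          intro j _
          rw [hI j]
          ring
      _ = ∑ i, U 0 i * (Nat.factorial k : ℝ) * (1 : Matrix (Fin (m+1)) (Fin (m+1)) ℝ) i k' := by
          simp_rw [← Matrix.mul_apply, hMinvMul]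
      _ = U 0 k' * (Nat.factorial k : ℝ) := by
          simp [Matrix.one_apply]
      _ = (0:ℝ) ^ k := by
          rw [hU 0 k']
          field_simp
          show (0:ℝ) ^ k * (Nat.factorial k : ℝ) = (Nat.factorial k : ℝ) * 0 ^ k
          ring
  constructor
  · have := key 0 (Nat.zero_le m)
    simpa using this
  · intro k hk1 hk2
    have := key k hk2
    rwa [zero_pow (by omega)] at this
end

section
/- Let m ≥ 1 be an integer, h = 1/m, and β, L > 0. Let K̄ : ℝ → ℝ be a square-integrable function with support contained in [−1/2, 1/2]. For k = 1, …, m set x_k = (k − 1/2)/m and φ_k(x) = L·h^β·K̄((x − x_k)/h). Then for all w, w′ ∈ {0,1}^m, ∫₀¹ ( Σ_{k=1}^m (w_k − w′_k) φ_k(x) )² dx = L² · h^{2β+1} · (∫_ℝ K̄(u)² du) · Σ_{k=1}^m (w_k − w′_k)². -/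
open MeasureTheory

/-- Let `m ≥ 1`, `h = 1/m`, `β, L > 0`, and `K̄` square-integrable with support in
`[−1/2, 1/2]`.  With `x_k = (k − 1/2)/m` and `φ_k(x) = L h^β K̄((x − x_k)/h)` for
`k = 1, …, m`, for all `w, w′ ∈ {0,1}^m`:
`∫₀¹ (Σ_k (w_k − w′_k) φ_k(x))² dx = L²·h^{2β+1}·(∫_ℝ K̄²)·Σ_k (w_k − w′_k)²`. -/
theorem stmt_16 (m : ℕ) (hm : 1 ≤ m) (h β L : ℝ)
    (hh : h = 1 / m) (hβ : 0 < β) (hL : 0 < L)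
    (Kbar : ℝ → ℝ) (hK2 : MemLp Kbar 2 (volume : Measure ℝ))
    (hKsupp : ∀ u, u ∉ Set.Icc (-(1 : ℝ) / 2) (1 / 2) → Kbar u = 0)
    (φ : Fin m → ℝ → ℝ)
    (hφ : ∀ i x, φ i x = L * h ^ β * Kbar ((x - ((i : ℝ) + 1 / 2) * h) / h))
    (w w' : Fin m → ℝ)
    (hw : ∀ i, w i = 0 ∨ w i = 1) (hw' : ∀ i, w' i = 0 ∨ w' i = 1) :
    (∫ x in (0 : ℝ)..1, (∑ i, (w i - w' i) * φ i x) ^ 2) =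
      L ^ 2 * h ^ (2 * β + 1) * (∫ u, (Kbar u) ^ 2) * ∑ i, (w i - w' i) ^ 2 := by
  have hm0 : (0:ℝ) < m := by exact_mod_cast hm
  have hpos : 0 < h := by rw [hh]; positivity
  have hmh : (m:ℝ) * h = 1 := by rw [hh]; field_simp
  set c : Fin m → ℝ := fun i => w i - w' i with hc
  -- support bound
  have hbound : ∀ (i : Fin m) (x : ℝ), φ i x ≠ 0 →
      (i:ℝ) * h ≤ x ∧ x ≤ ((i:ℝ) + 1) * h := by
    intro i x hne
    rw [hφ] at hne
    have hK : Kbar ((x - ((i:ℝ) + 1/2) * h) / h) ≠ 0 := by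
      intro h0; rw [h0, mul_zero] at hne; exact hne rfl
    have hmem : (x - ((i:ℝ) + 1/2) * h) / h ∈ Set.Icc (-(1:ℝ)/2) (1/2) := by
      by_contra hcon; exact hK (hKsupp _ hcon)
    obtain ⟨h1, h2⟩ := hmem
    rw [le_div_iff₀ hpos] at h1
    rw [div_le_iff₀ hpos] at h2
    constructor <;> nlinarith
  -- exceptional set
  set S : Set ℝ := Set.range (fun k : ℕ => (k:ℝ) * h) with hS
  have hSzero : volume S = 0 := (Set.countable_range _).measure_zero _
  have hdisj : ∀ x ∉ S, ∀ i j : Fin m, i ≠ j → φ i x * φ j x = 0 := by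
    intro x hx i j hij
    by_contra hne
    have hi := hbound i x (left_ne_zero_of_mul hne)
    have hj := hbound j x (right_ne_zero_of_mul hne)
    have hijn : (i:ℕ) ≠ (j:ℕ) := fun hcon => hij (Fin.ext hcon)
    rcases hijn.lt_or_gt with hlt | hlt
    · have h1 : ((i:ℕ):ℝ) + 1 ≤ ((j:ℕ):ℝ) := by exact_mod_cast hlt
      have : x = ((j:ℕ):ℝ) * h := by
        have := mul_le_mul_of_nonneg_right h1 hpos.le
        exact le_antisymm (by nlinarith [hi.2, hj.1]) hj.1
      exact hx ⟨(j:ℕ), this.symm⟩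
    · have h1 : ((j:ℕ):ℝ) + 1 ≤ ((i:ℕ):ℝ) := by exact_mod_cast hlt
      have : x = ((i:ℕ):ℝ) * h := by
        have := mul_le_mul_of_nonneg_right h1 hpos.le
        exact le_antisymm (by nlinarith [hj.2, hi.1]) hi.1
      exact hx ⟨(i:ℕ), this.symm⟩
  -- pointwise expansion off S
  have hpt : ∀ x ∉ S, (∑ i, c i * φ i x) ^ 2 = ∑ i, c i ^ 2 * (φ i x) ^ 2 := by
    intro x hx
    rw [sq, Finset.sum_mul_sum]
    refine Finset.sum_congr rfl fun i _ => ?_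
    rw [Finset.sum_eq_single i]
    · ring
    · intro j _ hji
      have h0 := hdisj x hx i j (fun e => hji e.symm)
      calc c i * φ i x * (c j * φ j x) = c i * c j * (φ i x * φ j x) := by ring
        _ = 0 := by rw [h0, mul_zero]
    · intro hi; exact absurd (Finset.mem_univ i) hi
  -- integrability of each φ i ^ 2
  have hφint : ∀ i : Fin m, Integrable (fun x => (φ i x) ^ 2) := by
    intro i
    have := (((hK2.integrable_sq.comp_div hpos.ne').comp_sub_right
      (((i:ℝ) + 1/2) * h)).const_mul ((L * h ^ β) ^ 2))
    exact this.congr (Filter.Eventually.of_forall fun x => by simp only [hφ]; ring)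
  -- value of each integral over ℝ
  have hval : ∀ i : Fin m, (∫ x, (φ i x) ^ 2) = (L * h ^ β) ^ 2 * h * ∫ u, Kbar u ^ 2 := by
    intro i
    have e1 : (fun x => (φ i x) ^ 2) =
        fun x => (L * h ^ β) ^ 2 * ((fun y => Kbar (y / h) ^ 2) (x - ((i:ℝ) + 1/2) * h)) := by
      funext x; rw [hφ]; ring
    rw [e1, integral_const_mul, integral_sub_right_eq_self (fun y => Kbar (y / h) ^ 2),
      MeasureTheory.Measure.integral_comp_div (fun u => Kbar u ^ 2) h, abs_of_pos hpos,
      smul_eq_mul]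
    ring
  -- restrict to [0,1]
  have hrestrict : ∀ i : Fin m,
      (∫ x in Set.Ioc (0:ℝ) 1, (φ i x) ^ 2) = ∫ x, (φ i x) ^ 2 := by
    intro i
    rw [← integral_Icc_eq_integral_Ioc]
    apply setIntegral_eq_integral_of_forall_compl_eq_zero
    intro x hx
    have h0 : φ i x = 0 := by
      by_contra hne
      obtain ⟨h1, h2⟩ := hbound i x hne
      apply hx
      have him : ((i:ℕ):ℝ) + 1 ≤ (m:ℝ) := by exact_mod_cast i.2
      constructor
      · nlinarith
      · nlinarith [mul_le_mul_of_nonneg_right him hpos.le]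
    rw [h0]; ring
  -- main computation
  rw [intervalIntegral.integral_of_le (by norm_num : (0:ℝ) ≤ 1)]
  have hae : (fun x => (∑ i, c i * φ i x) ^ 2)
      =ᵐ[(volume : Measure ℝ).restrict (Set.Ioc 0 1)]
      fun x => ∑ i, c i ^ 2 * (φ i x) ^ 2 := by
    apply ae_restrict_of_ae
    filter_upwards [measure_eq_zero_iff_ae_notMem.mp hSzero] with x hx using hpt x hx
  rw [integral_congr_ae hae,
    integral_finset_sum _ (fun i _ => ((hφint i).const_mul (c i ^ 2)).integrableOn)]
  have hsum : ∀ i : Fin m, (∫ x in Set.Ioc (0:ℝ) 1, c i ^ 2 * (φ i x) ^ 2)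
      = c i ^ 2 * ((L * h ^ β) ^ 2 * h * ∫ u, Kbar u ^ 2) := by
    intro i
    rw [integral_const_mul, hrestrict, hval]
  simp_rw [hsum]
  rw [← Finset.sum_mul]
  have hrpow : h ^ (2 * β + 1) = (h ^ β) ^ 2 * h := by
    rw [Real.rpow_add hpos, Real.rpow_one, two_mul, Real.rpow_add hpos, sq]
  rw [hrpow]
  ring
end
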